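/- arXiv:1901.07944 — 5 statements merged into one kernel-verified Lean document; each statement's English description precedes it below -/
import Mathlib

section
/- Let P = (C, {P_i}_{i=1}^{ℓ−1}, A_1, B_ℓ) be a strong Path-of-Sets System of length ℓ and width w, for some ℓ, w ≥ 1, with C = (C_1,…,C_ℓ). Suppose we are given, for all 1 ≤ i ≤ ⌈ℓ/2⌉, subsets A'_{2i−1} ⊆ A_{2i−1} and B'_{2i−1} ⊆ B_{2i−1} of cardinality w' each. Then there is a Path-of-Sets System P̂ = (Ĉ, {P̂_i}_{i=1}^{⌈ℓ/2⌉−1}, Â_1, B̂_{⌈ℓ/2⌉}) of length ⌈ℓ/2⌉ and width w', such that Ĉ = (C_1, C_3, …, C_{2⌈ℓ/2⌉−1}), and for each 1 ≤ i ≤ ⌈ℓ/2⌉, Â_i = A'_{2i−1} and B̂_i = B'_{2i−1}. Moreover, if the even-indexed clusters are not needed for the new system: the new system P̂ is strong whenever each A'_{2i−1} is node-well-linked, each B'_{2i−1} is node-well-linked, and (A'_{2i−1},B'_{2i−1}) are node-linked in C_{2i−1}. -/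
/-!
The `i`-th link of the stitched system runs along a link path of `P_{2i-1}` into the discarded
cluster `C_{2i}`, crosses it by a path that node-linkedness of `(A_{2i}, B_{2i})` provides between
the arrival vertices, and leaves along a link path of `P_{2i}`. Node-linkedness routes `w'`
disjoint such paths at once, and the routes of different links stay in disjoint parts of the old
system: link paths of distinct old links, and distinct clusters, are disjoint.
-/

open SimpleGraph

/-- A simple path in a graph `G`, packaged with its two endpoints. -/
structure GraphPath {V : Type} (G : SimpleGraph V) where
  first : V
  last : V
  walk : G.Walk first last
  isPath : walk.IsPath

namespace GraphPath

variable {V : Type} {G : SimpleGraph V}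

/-- The set of vertices of a path. -/
def support (p : GraphPath G) : Set V := {v | v ∈ p.walk.support}

/-- The set of edges of a path. -/
def edges (p : GraphPath G) : Set (Sym2 V) := {e | e ∈ p.walk.edges}

/-- The path is contained in the subgraph `H` of `G`. -/
def InSubgraph (p : GraphPath G) (H : G.Subgraph) : Prop :=
  p.support ⊆ H.verts ∧ p.edges ⊆ H.edgeSet

/-- `p` is a contiguous subpath of `q` (its vertex sequence is a contiguous
subsequence of that of `q`). -/
def IsSubpathOf (p q : GraphPath G) : Prop :=
  p.walk.support <:+: q.walk.support

end GraphPath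

section BasicDefs

variable {V : Type}

/-- `u` occurs strictly before `v` on the path `p`. -/
def beforeOn {G : SimpleGraph V} (p : GraphPath G) (u v : V) : Prop :=
  ∃ l₁ l₂ l₃ : List V, p.walk.support = l₁ ++ u :: (l₂ ++ v :: l₃)

/-- A family of pairwise vertex-disjoint paths. -/
def NodeDisjointFamily {ι : Type} {G : SimpleGraph V} (P : ι → GraphPath G) : Prop :=
  ∀ i j, i ≠ j → Disjoint (P i).support (P j).support

/-- A family of pairwise edge-disjoint paths. -/
def EdgeDisjointFamily {ι : Type} {G : SimpleGraph V} (P : ι → GraphPath G) : Prop :=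
  ∀ i j, i ≠ j → Disjoint (P i).edges (P j).edges

/-- `T` is node-well-linked in the subgraph `H` of `G`: every two disjoint (finite)
subsets `T', T''` of `T` are joined by `min |T'| |T''|` node-disjoint paths inside `H`. -/
def NodeWellLinkedIn (G : SimpleGraph V) (H : G.Subgraph) (T : Set V) : Prop :=
  ∀ T' T'' : Set V, T' ⊆ T → T'' ⊆ T → Disjoint T' T'' → T'.Finite → T''.Finite →
    ∃ P : Fin (min T'.ncard T''.ncard) → GraphPath G,
      (∀ j, (P j).InSubgraph H) ∧ NodeDisjointFamily P ∧
        ∀ j, (P j).first ∈ T' ∧ (P j).last ∈ T''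

/-- `(A, B)` are node-linked in the subgraph `H` of `G`. -/
def NodeLinkedIn (G : SimpleGraph V) (H : G.Subgraph) (A B : Set V) : Prop :=
  ∀ A' B' : Set V, A' ⊆ A → B' ⊆ B → A'.Finite → B'.Finite →
    ∃ P : Fin (min A'.ncard B'.ncard) → GraphPath G,
      (∀ j, (P j).InSubgraph H) ∧ NodeDisjointFamily P ∧
        ∀ j, (P j).first ∈ A' ∧ (P j).last ∈ B'

/-- `T` is edge-well-linked in the subgraph `H` of `G`. -/
def EdgeWellLinkedIn (G : SimpleGraph V) (H : G.Subgraph) (T : Set V) : Prop :=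
  ∀ T' T'' : Set V, T' ⊆ T → T'' ⊆ T → Disjoint T' T'' → T'.Finite → T''.Finite →
    ∃ P : Fin (min T'.ncard T''.ncard) → GraphPath G,
      (∀ j, (P j).InSubgraph H) ∧ EdgeDisjointFamily P ∧
        ∀ j, (P j).first ∈ T' ∧ (P j).last ∈ T''

/-- `T` is `w`-weakly well-linked in the subgraph `H` of `G`: every two disjoint
subsets `T', T''` of `T` are joined by `min (min |T'| |T''|) w` edge-disjoint paths. -/
def WeaklyWellLinkedIn (G : SimpleGraph V) (H : G.Subgraph) (T : Set V) (w : ℕ) : Prop :=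
  ∀ T' T'' : Set V, T' ⊆ T → T'' ⊆ T → Disjoint T' T'' → T'.Finite → T''.Finite →
    ∃ P : Fin (min (min T'.ncard T''.ncard) w) → GraphPath G,
      (∀ j, (P j).InSubgraph H) ∧ EdgeDisjointFamily P ∧
        ∀ j, (P j).first ∈ T' ∧ (P j).last ∈ T''

/-- The maximum vertex degree of `G` is at most `d`. -/
def MaxDegreeLE (G : SimpleGraph V) (d : ℕ) : Prop :=
  ∀ v, (G.neighborSet v).ncard ≤ d

/-- The set of edges of `G` with one endpoint in `X` and the other in `Y`. -/
def crossEdges (G : SimpleGraph V) (X Y : Set V) : Set (Sym2 V) :=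
  {e | e ∈ G.edgeSet ∧ ∃ x ∈ X, ∃ y ∈ Y, e = s(x, y)}

end BasicDefs

/-- Casting an index of a link set of a Path-of-Sets System to the index
of the cluster on its left. -/
def posIdx {ℓ : ℕ} (i : Fin (ℓ - 1)) : Fin ℓ :=
  ⟨i.val, by have := i.isLt; omega⟩

/-- Casting an index of a link set of a Path-of-Sets System to the index
of the cluster on its right. -/
def posIdxSucc {ℓ : ℕ} (i : Fin (ℓ - 1)) : Fin ℓ :=
  ⟨i.val + 1, by have := i.isLt; omega⟩

/-- The index of the `i`-th odd-indexed cluster. -/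
def oddIdx {ℓ : ℕ} (i : Fin ((ℓ + 1) / 2)) : Fin ℓ :=
  ⟨2 * i.val, by have := i.isLt; omega⟩

/-- A Path-of-Sets System of length `ℓ` and width `w` in the graph `G`. -/
structure PathOfSets {V : Type} (G : SimpleGraph V) (ℓ w : ℕ) where
  C : Fin ℓ → G.Subgraph
  A : Fin ℓ → Set V
  B : Fin ℓ → Set V
  P : Fin (ℓ - 1) → Fin w → GraphPath G
  C_connected : ∀ i, (C i).Connected
  C_disjoint : ∀ i j, i ≠ j → Disjoint (C i).verts (C j).verts
  A_sub : ∀ i, A i ⊆ (C i).verts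
  B_sub : ∀ i, B i ⊆ (C i).verts
  AB_disjoint : ∀ i, Disjoint (A i) (B i)
  A_card : ∀ i, (A i).ncard = w
  B_card : ∀ i, (B i).ncard = w
  P_first : ∀ i j, (P i j).first ∈ B (posIdx i)
  P_last : ∀ i j, (P i j).last ∈ A (posIdxSucc i)
  P_disjoint : ∀ i j i' j', (i, j) ≠ (i', j') →
    Disjoint (P i j).support (P i' j').support
  P_internal : ∀ i j (k : Fin ℓ) v, v ∈ (P i j).support → v ∈ (C k).verts →
    v = (P i j).first ∨ v = (P i j).last

/-- A strong Path-of-Sets System. -/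
def PathOfSets.Strong {V : Type} {G : SimpleGraph V} {ℓ w : ℕ}
    (PoS : PathOfSets G ℓ w) : Prop :=
  ∀ i, NodeWellLinkedIn G (PoS.C i) (PoS.A i) ∧ NodeWellLinkedIn G (PoS.C i) (PoS.B i) ∧
    NodeLinkedIn G (PoS.C i) (PoS.A i) (PoS.B i)

/-- A weak Path-of-Sets System. -/
def PathOfSets.Weak {V : Type} {G : SimpleGraph V} {ℓ w : ℕ}
    (PoS : PathOfSets G ℓ w) : Prop :=
  ∀ i, EdgeWellLinkedIn G (PoS.C i) (PoS.A i ∪ PoS.B i)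

/-- A hairy Path-of-Sets System of length `ℓ` and width `w`. -/
structure HairyPathOfSets {V : Type} (G : SimpleGraph V) (ℓ w : ℕ) where
  pos : PathOfSets G ℓ w
  strong : pos.Strong
  S : Fin ℓ → G.Subgraph
  S_connected : ∀ i, (S i).Connected
  S_disjoint : ∀ i j, i ≠ j → Disjoint (S i).verts (S j).verts
  S_C_disjoint : ∀ i j, Disjoint (S i).verts (pos.C j).verts
  S_P_disjoint : ∀ i j k, Disjoint (S i).verts (pos.P j k).support
  Y : Fin ℓ → Set V
  Y_sub : ∀ i, Y i ⊆ (S i).verts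
  Y_card : ∀ i, (Y i).ncard = w
  Y_wl : ∀ i, NodeWellLinkedIn G (S i) (Y i)
  X : Fin ℓ → Set V
  X_sub : ∀ i, X i ⊆ (pos.C i).verts
  X_card : ∀ i, (X i).ncard = w
  X_AB : ∀ i, X i ∩ (pos.A i ∪ pos.B i) = ∅
  X_linked : ∀ i, NodeLinkedIn G (pos.C i) (pos.A i) (X i)
  Q : Fin ℓ → Fin w → GraphPath G
  Q_first : ∀ i j, (Q i j).first ∈ X i
  Q_last : ∀ i j, (Q i j).last ∈ Y i
  Q_disjoint : ∀ i j i' j', (i, j) ≠ (i', j') →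
    Disjoint (Q i j).support (Q i' j').support
  Q_P_disjoint : ∀ i j i' j', Disjoint (Q i j).support (pos.P i' j').support
  Q_internal : ∀ i j (k : Fin ℓ) v, v ∈ (Q i j).support →
    (v ∈ (S k).verts ∨ v ∈ (pos.C k).verts) →
    v = (Q i j).first ∨ v = (Q i j).last

/-- An `(A, B, X)`-crossbar of width `ρ` inside the subgraph `H` of `G`. -/
structure CrossbarIn {V : Type} (G : SimpleGraph V) (H : G.Subgraph)
    (A B X : Set V) (ρ : ℕ) where
  P : Fin ρ → GraphPath G
  Q : Fin ρ → GraphPath G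
  P_in : ∀ i, (P i).InSubgraph H
  Q_in : ∀ i, (Q i).InSubgraph H
  P_first : ∀ i, (P i).first ∈ A
  P_last : ∀ i, (P i).last ∈ B
  P_disjoint : ∀ i j, i ≠ j → Disjoint (P i).support (P j).support
  Q_disjoint : ∀ i j, i ≠ j → Disjoint (Q i).support (Q j).support
  Q_last : ∀ i, (Q i).last ∈ X
  cross_disjoint : ∀ i j, i ≠ j → Disjoint (P i).support (Q j).support
  touch : ∀ i, (P i).support ∩ (Q i).support = {(Q i).first}

/-- A model of the graph `H` as a minor of the graph `G`: every vertex of `H` is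
mapped to a connected subgraph of `G`, the images being pairwise disjoint, and every
edge of `H` is mapped to a path of `G` connecting the images of its endpoints, the
paths being pairwise internally disjoint and internally disjoint from all the
vertex images. -/
structure MinorModel {V W : Type} (G : SimpleGraph V) (H : SimpleGraph W) where
  vmap : W → G.Subgraph
  vmap_connected : ∀ u, (vmap u).Connected
  vmap_disjoint : ∀ u u', u ≠ u' → Disjoint (vmap u).verts (vmap u').verts
  emap : ∀ ⦃u v : W⦄, H.Adj u v → GraphPath G
  emap_first : ∀ ⦃u v : W⦄ (h : H.Adj u v), (emap h).first ∈ (vmap u).verts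
  emap_last : ∀ ⦃u v : W⦄ (h : H.Adj u v), (emap h).last ∈ (vmap v).verts
  emap_internal : ∀ ⦃u v : W⦄ (h : H.Adj u v) (x : V) (u'' : W),
    x ∈ (emap h).support → x ∈ (vmap u'').verts →
    x = (emap h).first ∨ x = (emap h).last
  emap_disjoint : ∀ ⦃u v u' v' : W⦄ (h : H.Adj u v) (h' : H.Adj u' v'),
    s(u, v) ≠ s(u', v') → ∀ x, x ∈ (emap h).support → x ∈ (emap h').support →
      (x = (emap h).first ∨ x = (emap h).last) ∧
      (x = (emap h').first ∨ x = (emap h').last)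

/-- The `(g × g)`-grid graph. -/
def gridGraph (g : ℕ) : SimpleGraph (Fin g × Fin g) :=
  SimpleGraph.fromRel fun a b =>
    (a.1 = b.1 ∧ a.2.val + 1 = b.2.val) ∨ (a.2 = b.2 ∧ a.1.val + 1 = b.1.val)

/-- A tree-decomposition of the graph `G`. -/
structure TreeDecomp {V : Type} (G : SimpleGraph V) where
  ι : Type
  tree : SimpleGraph ι
  tree_isTree : tree.IsTree
  bag : ι → Set V
  bag_vertex : ∀ v : V, ∃ i, v ∈ bag i
  bag_edge : ∀ ⦃u v : V⦄, G.Adj u v → ∃ i, u ∈ bag i ∧ v ∈ bag i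
  bag_subtree : ∀ v : V, (tree.induce {i | v ∈ bag i}).Connected

/-- The treewidth of `G` is at least `k`: every tree-decomposition has a bag of
cardinality at least `k + 1`. -/
def HasTreewidthAtLeast {V : Type} (G : SimpleGraph V) (k : ℕ) : Prop :=
  ∀ D : TreeDecomp G, ∃ i, k + 1 ≤ (D.bag i).ncard

/-- A multigraph on the vertex type `ν`, with an abstract finite edge type
and no loops. -/
structure MultigraphOn (ν : Type) where
  E : Type
  E_finite : Finite E
  ends : E → ν × ν
  no_loops : ∀ e, (ends e).1 ≠ (ends e).2

/-- The degree of a vertex in a multigraph. -/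
noncomputable def MultigraphOn.degree {ν : Type} (M : MultigraphOn ν) (v : ν) : ℕ :=
  {e : M.E | (M.ends e).1 = v ∨ (M.ends e).2 = v}.ncard

/-- The set of edges of a multigraph with exactly one endpoint in `S`. -/
def MultigraphOn.crossing {ν : Type} (M : MultigraphOn ν) (S : Set ν) : Set M.E :=
  {e | ((M.ends e).1 ∈ S ∧ (M.ends e).2 ∉ S) ∨ ((M.ends e).1 ∉ S ∧ (M.ends e).2 ∈ S)}

/-- A multigraph is a `1/2`-expander: every `S` with `|S| ≤ |V|/2` has at least
`|S|/2` edges leaving it. -/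
def MultigraphOn.IsHalfExpander {ν : Type} (M : MultigraphOn ν) : Prop :=
  ∀ S : Set ν, 2 * S.ncard ≤ Nat.card ν → S.ncard ≤ 2 * (M.crossing S).ncard

/-- A model of the multigraph `M` as a minor of the graph `G`. -/
structure MultiMinorModel {V ν : Type} (G : SimpleGraph V) (M : MultigraphOn ν) where
  vmap : ν → G.Subgraph
  vmap_connected : ∀ u, (vmap u).Connected
  vmap_disjoint : ∀ u u', u ≠ u' → Disjoint (vmap u).verts (vmap u').verts
  emap : M.E → GraphPath G
  emap_first : ∀ e, (emap e).first ∈ (vmap (M.ends e).1).verts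
  emap_last : ∀ e, (emap e).last ∈ (vmap (M.ends e).2).verts
  emap_internal : ∀ e (x : V) (u : ν), x ∈ (emap e).support → x ∈ (vmap u).verts →
    x = (emap e).first ∨ x = (emap e).last
  emap_disjoint : ∀ e e', e ≠ e' → ∀ x, x ∈ (emap e).support → x ∈ (emap e').support →
      (x = (emap e).first ∨ x = (emap e).last) ∧
      (x = (emap e').first ∨ x = (emap e').last)

section PathSets

variable {V : Type} {G : SimpleGraph V}

/-- `(Rh, Qh)` is a `(w, D)`-intersecting pair of path sets. -/
def IntersectingPair (Rh Qh : Set (GraphPath G)) (w D : ℕ) : Prop :=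
  (∀ r ∈ Rh, w ≤ {q ∈ Qh | ¬ Disjoint r.support q.support}.ncard) ∧
  (∀ q ∈ Qh, D ≤ {r ∈ Rh | ¬ Disjoint r.support q.support}.ncard)

/-- The paths of `Sig` entirely contained in the subgraph `C`. -/
def pathsIn (Sig : Set (GraphPath G)) (C : G.Subgraph) : Set (GraphPath G) :=
  {σ ∈ Sig | σ.InSubgraph C}

/-- The endpoints of the paths of `Sig` entirely contained in the subgraph `C`. -/
def pathEndpoints (Sig : Set (GraphPath G)) (C : G.Subgraph) : Set V :=
  {v | ∃ σ ∈ pathsIn Sig C, v = σ.first ∨ v = σ.last}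

/-- `R` is an `(A, B)`-linkage: a set of pairwise node-disjoint paths connecting
every vertex of `A` to a distinct vertex of `B`. -/
def IsLinkage (A B : Set V) (R : Set (GraphPath G)) : Prop :=
  (R.Pairwise fun p q => Disjoint p.support q.support) ∧
  (∀ p ∈ R, p.first ∈ A ∧ p.last ∈ B) ∧
  (∀ a ∈ A, ∃ p ∈ R, p.first = a) ∧
  (∀ b ∈ B, ∃ p ∈ R, p.last = b)

/-- `G` has the perfect unique linkage property with respect to `(A, B)`, with
unique linkage `R`: `R` is the unique `(A, B)`-linkage and every vertex of `G`
lies on a path of `R`. -/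
def PerfectUniqueLinkage (A B : Set V) (R : Set (GraphPath G)) : Prop :=
  IsLinkage A B R ∧ (∀ R' : Set (GraphPath G), IsLinkage A B R' → R' = R) ∧
  (∀ v : V, ∃ p ∈ R, v ∈ p.support)

/-- An `M`-slicing of the set `Rh` of paths: for each path of `Rh`, a sequence of
`M + 1` vertices appearing on it in order, starting at its first vertex and ending
at its last vertex. -/
structure Slicing (Rh : Set (GraphPath G)) (M : ℕ) where
  seq : GraphPath G → Fin (M + 1) → V
  first_eq : ∀ p ∈ Rh, seq p 0 = p.first
  last_eq : ∀ p ∈ Rh, seq p (Fin.last M) = p.last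
  mem : ∀ p ∈ Rh, ∀ i, seq p i ∈ p.support
  ordered : ∀ p ∈ Rh, ∀ i j : Fin (M + 1), i < j →
    seq p i = seq p j ∨ beforeOn p (seq p i) (seq p j)

/-- `x` lies strictly inside the `i`-th segment of the path `p`, with respect to the
slicing `S`. -/
def Slicing.inSegment {Rh : Set (GraphPath G)} {M : ℕ} (S : Slicing Rh M)
    (p : GraphPath G) (i : Fin M) (x : V) : Prop :=
  beforeOn p (S.seq p i.castSucc) x ∧ beforeOn p x (S.seq p i.succ)

/-- A pair of families of `κ` node-disjoint paths: the paths of `P` connect the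
vertices of `A` to vertices of `B`, the paths of `Q` connect the vertices of `A` to
vertices of `X`. -/
def ValidLinkPair (G : SimpleGraph V) (A B X : Set V) (κ : ℕ)
    (P Q : Fin κ → GraphPath G) : Prop :=
  NodeDisjointFamily P ∧ NodeDisjointFamily Q ∧
  (∀ i, (P i).first ∈ A ∧ (P i).last ∈ B) ∧
  (∀ i, (Q i).first ∈ A ∧ (Q i).last ∈ X) ∧
  (∀ a ∈ A, ∃ i, (P i).first = a) ∧
  (∀ a ∈ A, ∃ i, (Q i).first = a)

/-- The edge set of the graph `H(P, Q)`, the union of all paths of `P` and `Q`. -/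
def LinkPairEdges {κ : ℕ} (P Q : Fin κ → GraphPath G) : Set (Sym2 V) :=
  (⋃ i, (P i).edges) ∪ ⋃ i, (Q i).edges

/-- A pseudo-grid of depth `D` with respect to the path families `P`, `Q` and the
set `X`: `R i` are the (index sets of the) disjoint layers, each of at most `g ^ 2`
paths of `P`; `Q'` is a family of `⌈κ/4⌉` node-disjoint paths, each a subpath of the
`Q`-path `Q (f j)` for a distinct index `f j` outside all layers, with exactly one
endpoint in `X`, such that the paths of `Q'` avoid all `P`-paths outside the layers
(property P1) and, for every layer, all but at most `2 g ^ 2` paths of `Q'` meet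
some path of that layer (property P2). -/
def IsPseudoGrid {G : SimpleGraph V} (X : Set V) (g κ D : ℕ)
    (P Q : Fin κ → GraphPath G) (R : Fin D → Set (Fin κ))
    (Q' : Fin ((κ + 3) / 4) → GraphPath G) (f : Fin ((κ + 3) / 4) → Fin κ) : Prop :=
  (∀ i j, i ≠ j → Disjoint (R i) (R j)) ∧
  (∀ i, (R i).ncard ≤ g ^ 2) ∧
  Function.Injective f ∧
  (∀ j i, f j ∉ R i) ∧
  (∀ j, (Q' j).IsSubpathOf (Q (f j))) ∧
  (∀ j, Xor' ((Q' j).first ∈ X) ((Q' j).last ∈ X)) ∧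
  NodeDisjointFamily Q' ∧
  (∀ j k, (∀ i, k ∉ R i) → Disjoint (Q' j).support (P k).support) ∧
  (∀ i, {j | ∀ k ∈ R i, Disjoint (Q' j).support (P k).support}.ncard ≤ 2 * g ^ 2)

end PathSets

/-- The separator `S_t` associated with the numbering `μ` and the linkage `Rh`:
for each path of `Rh` it contains the first vertex whose `μ`-number (shifted to the
range `{1, …, n}`) is at least `t`, or the last vertex of the path if there is no
such vertex. -/
def sepSet {V : Type} [Fintype V] {G : SimpleGraph V} (Rh : Set (GraphPath G))
    (μ : V ≃ Fin (Fintype.card V)) (t : ℕ) : Set V :=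
  {v | ∃ p ∈ Rh, v ∈ p.support ∧
    ((t ≤ (μ v).val + 1 ∧ ∀ u, beforeOn p u v → (μ u).val + 1 < t) ∨
     (v = p.last ∧ ∀ u ∈ p.support, (μ u).val + 1 < t))}


namespace GraphPath

variable {V : Type} {G : SimpleGraph V}

lemma first_mem_support (p : GraphPath G) : p.first ∈ p.support :=
  p.walk.start_mem_support

lemma last_mem_support (p : GraphPath G) : p.last ∈ p.support :=
  p.walk.end_mem_support

def append (p q : GraphPath G) (h : p.last = q.first)
    (hd : ∀ v ∈ p.support, v ∈ q.support → v = p.last) : GraphPath G where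
  first := p.first
  last := q.last
  walk := p.walk.append (q.walk.copy h.symm rfl)
  isPath := by
    rw [Walk.isPath_def, Walk.support_append, Walk.support_copy]
    refine p.isPath.support_nodup.append q.isPath.support_nodup.tail fun v hvp hvq => ?_
    have hnd : (q.first :: q.walk.support.tail).Nodup := by
      rw [Walk.cons_tail_support]; exact q.isPath.support_nodup
    rw [hd v hvp (List.mem_of_mem_tail hvq), h] at hvq
    exact (List.nodup_cons.mp hnd).1 hvq

variable {p q : GraphPath G} {h : p.last = q.first}
  {hd : ∀ v ∈ p.support, v ∈ q.support → v = p.last}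

@[simp] lemma append_last : (p.append q h hd).last = q.last := rfl

@[simp] lemma support_append : (p.append q h hd).support = p.support ∪ q.support := by
  ext v
  simp only [append, support, Set.mem_ofPred_eq, Set.mem_union, Walk.mem_support_append_iff,
    Walk.support_copy]

end GraphPath

section Concatenation

variable {V ι : Type} {G : SimpleGraph V}

theorem NodeDisjointFamily.exists_concat {S : Set V} {X M Y : ι → GraphPath G}
    (hX : NodeDisjointFamily X) (hM : NodeDisjointFamily M) (hY : NodeDisjointFamily Y)
    (hXM : ∀ j, (X j).last = (M j).first) (hMY : ∀ j, (M j).last = (Y j).first)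
    (hMS : ∀ j, (M j).support ⊆ S)
    (hXS : ∀ j, ∀ v ∈ (X j).support, v ∈ S → v = (X j).last)
    (hYS : ∀ j, ∀ v ∈ (Y j).support, v ∈ S → v = (Y j).first)
    (hXY : ∀ i j, Disjoint (X i).support (Y j).support) :
    ∃ Z : ι → GraphPath G, NodeDisjointFamily Z ∧ ∀ j, (Z j).first = (X j).first ∧
      (Z j).last = (Y j).last ∧
      (Z j).support = (X j).support ∪ (M j).support ∪ (Y j).support := by
  have hX_M : ∀ i j, i ≠ j → Disjoint (X i).support (M j).support := by
    refine fun i j hij => Set.disjoint_left.mpr fun v hvX hvM => ?_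
    have hv : v = (M i).first := (hXS i v hvX (hMS j hvM)).trans (hXM i)
    exact Set.disjoint_left.mp (hM i j hij) (hv ▸ (M i).first_mem_support) hvM
  have hM_Y : ∀ i j, i ≠ j → Disjoint (M i).support (Y j).support := by
    refine fun i j hij => Set.disjoint_left.mpr fun v hvM hvY => ?_
    have hv : v = (M j).last := (hYS j v hvY (hMS i hvM)).trans (hMY j).symm
    exact Set.disjoint_left.mp (hM i j hij) hvM (hv ▸ (M j).last_mem_support)
  have hXM_Y : ∀ j, ∀ v ∈ (X j).support ∪ (M j).support, v ∈ (Y j).support →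
      v = (M j).last := by
    rintro j v (hvX | hvM) hvY
    · exact absurd hvY (Set.disjoint_left.mp (hXY j j) hvX)
    · exact (hYS j v hvY (hMS j hvM)).trans (hMY j).symm
  refine ⟨fun j => ((X j).append (M j) (hXM j)
      fun v hvX hvM => hXS j v hvX (hMS j hvM)).append (Y j) (by simpa using hMY j)
      (by simpa using hXM_Y j), fun i j hij => ?_, fun j => ⟨rfl, rfl, by simp⟩⟩
  simp only [GraphPath.support_append, Set.disjoint_union_left, Set.disjoint_union_right]
  exact ⟨⟨⟨⟨hX i j hij, (hX_M j i hij.symm).symm⟩, (hXY j i).symm⟩,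
      ⟨⟨hX_M i j hij, hM i j hij⟩, (hM_Y j i hij.symm).symm⟩⟩,
    ⟨⟨hXY i j, hM_Y i j hij⟩, hY i j hij⟩⟩

end Concatenation

namespace PathOfSets

variable {V : Type} {G : SimpleGraph V} {ℓ w : ℕ} (PoS : PathOfSets G ℓ w)

lemma disjoint_P_support {e e' : Fin (ℓ - 1)} (k k' : Fin w) (he : e ≠ e') :
    Disjoint (PoS.P e k).support (PoS.P e' k').support :=
  PoS.P_disjoint e k e' k' fun h => he (congrArg Prod.fst h)

lemma P_first_injective (e : Fin (ℓ - 1)) : Function.Injective fun k => (PoS.P e k).first := by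
  intro k k' (h : (PoS.P e k).first = (PoS.P e k').first)
  by_contra hne
  exact Set.disjoint_left.mp (PoS.P_disjoint e k e k' fun hp => hne (congrArg Prod.snd hp))
    (PoS.P e k).first_mem_support (h ▸ (PoS.P e k').first_mem_support)

lemma P_last_injective (e : Fin (ℓ - 1)) : Function.Injective fun k => (PoS.P e k).last := by
  intro k k' (h : (PoS.P e k).last = (PoS.P e k').last)
  by_contra hne
  exact Set.disjoint_left.mp (PoS.P_disjoint e k e k' fun hp => hne (congrArg Prod.snd hp))
    (PoS.P e k).last_mem_support (h ▸ (PoS.P e k').last_mem_support)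

lemma range_P_first [Finite V] (e : Fin (ℓ - 1)) :
    Set.range (fun k => (PoS.P e k).first) = PoS.B (posIdx e) :=
  Set.eq_of_subset_of_ncard_le (Set.range_subset_iff.mpr (PoS.P_first e))
    (by rw [PoS.B_card, Set.ncard_range_of_injective (PoS.P_first_injective e), Nat.card_fin])

lemma range_P_last [Finite V] (e : Fin (ℓ - 1)) :
    Set.range (fun k => (PoS.P e k).last) = PoS.A (posIdxSucc e) :=
  Set.eq_of_subset_of_ncard_le (Set.range_subset_iff.mpr (PoS.P_last e))
    (by rw [PoS.A_card, Set.ncard_range_of_injective (PoS.P_last_injective e), Nat.card_fin])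

lemma ncard_P_last_image [Finite V] {e : Fin (ℓ - 1)} {S : Set V} (hS : S ⊆ PoS.B (posIdx e)) :
    ((fun k => (PoS.P e k).last) '' ((fun k => (PoS.P e k).first) ⁻¹' S)).ncard = S.ncard := by
  rw [Set.ncard_image_of_injective _ (PoS.P_last_injective e),
    Set.ncard_preimage_of_injective_subset_range (PoS.P_first_injective e)
      (hS.trans (PoS.range_P_first e).ge)]

lemma ncard_P_first_image [Finite V] {e : Fin (ℓ - 1)} {T : Set V}
    (hT : T ⊆ PoS.A (posIdxSucc e)) :
    ((fun k => (PoS.P e k).first) '' ((fun k => (PoS.P e k).last) ⁻¹' T)).ncard = T.ncard := by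
  rw [Set.ncard_image_of_injective _ (PoS.P_first_injective e),
    Set.ncard_preimage_of_injective_subset_range (PoS.P_last_injective e)
      (hT.trans (PoS.range_P_last e).ge)]

lemma eq_P_first_of_mem_C {e : Fin (ℓ - 1)} {k : Fin w} {c : Fin ℓ} {v : V}
    (hc : c ≠ posIdxSucc e) (hvP : v ∈ (PoS.P e k).support) (hvC : v ∈ (PoS.C c).verts) :
    v = (PoS.P e k).first := by
  refine (PoS.P_internal e k c v hvP hvC).resolve_right fun hv => ?_
  exact Set.disjoint_left.mp (PoS.C_disjoint c _ hc) hvC (PoS.A_sub _ (hv ▸ PoS.P_last e k))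

lemma eq_P_last_of_mem_C {e : Fin (ℓ - 1)} {k : Fin w} {c : Fin ℓ} {v : V}
    (hc : c ≠ posIdx e) (hvP : v ∈ (PoS.P e k).support) (hvC : v ∈ (PoS.C c).verts) :
    v = (PoS.P e k).last := by
  refine (PoS.P_internal e k c v hvP hvC).resolve_left fun hv => ?_
  exact Set.disjoint_left.mp (PoS.C_disjoint c _ hc) hvC (PoS.B_sub _ (hv ▸ PoS.P_first e k))

lemma disjoint_P_support_C {e : Fin (ℓ - 1)} (k : Fin w) {c : Fin ℓ}
    (hc : c ≠ posIdx e) (hc' : c ≠ posIdxSucc e) :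
    Disjoint (PoS.P e k).support (PoS.C c).verts := by
  refine Set.disjoint_left.mpr fun v hvP hvC => ?_
  have hv := PoS.eq_P_first_of_mem_C hc' hvP hvC
  exact Set.disjoint_left.mp (PoS.C_disjoint c _ hc) hvC (PoS.B_sub _ (hv ▸ PoS.P_first e k))

def Traverses (p : GraphPath G) (e₁ e₂ : Fin (ℓ - 1)) : Prop :=
  ∃ k₁ k₂, p.first = (PoS.P e₁ k₁).first ∧ p.last = (PoS.P e₂ k₂).last ∧
    p.support ⊆ (PoS.P e₁ k₁).support ∪ (PoS.C (posIdx e₂)).verts ∪ (PoS.P e₂ k₂).support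

theorem exists_traversing_paths [Finite V] {e₁ e₂ : Fin (ℓ - 1)}
    (he : posIdxSucc e₁ = posIdx e₂)
    (hlinked : NodeLinkedIn G (PoS.C (posIdx e₂)) (PoS.A (posIdx e₂)) (PoS.B (posIdx e₂)))
    {S T : Set V} {n : ℕ} (hS : S ⊆ PoS.B (posIdx e₁)) (hT : T ⊆ PoS.A (posIdxSucc e₂))
    (hSn : S.ncard = n) (hTn : T.ncard = n) :
    ∃ p : Fin n → GraphPath G, NodeDisjointFamily p ∧
      ∀ j, (p j).first ∈ S ∧ (p j).last ∈ T ∧ PoS.Traverses (p j) e₁ e₂ := by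
  have hval : e₁.val + 1 = e₂.val := congrArg Fin.val he
  set S₁ := (fun k => (PoS.P e₁ k).last) '' ((fun k => (PoS.P e₁ k).first) ⁻¹' S)
  set T₁ := (fun k => (PoS.P e₂ k).first) '' ((fun k => (PoS.P e₂ k).last) ⁻¹' T)
  have hS₁ : S₁ ⊆ PoS.A (posIdx e₂) :=
    he ▸ Set.image_subset_iff.mpr fun k _ => PoS.P_last e₁ k
  have hT₁ : T₁ ⊆ PoS.B (posIdx e₂) := Set.image_subset_iff.mpr fun k _ => PoS.P_first e₂ k
  have hmin : min S₁.ncard T₁.ncard = n := by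
    rw [PoS.ncard_P_last_image hS, PoS.ncard_P_first_image hT, hSn, hTn, min_self]
  obtain ⟨M, hM_in, hM_disj, hM_ends⟩ : ∃ M : Fin n → GraphPath G,
      (∀ j, (M j).InSubgraph (PoS.C (posIdx e₂))) ∧ NodeDisjointFamily M ∧
        ∀ j, (M j).first ∈ S₁ ∧ (M j).last ∈ T₁ :=
    hmin ▸ hlinked S₁ T₁ hS₁ hT₁ (Set.toFinite _) (Set.toFinite _)
  choose k₁ hk₁S hk₁M using fun j => (hM_ends j).1
  choose k₂ hk₂T hk₂M using fun j => (hM_ends j).2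
  have hk₁ : Function.Injective k₁ := fun i j h => by
    by_contra hij
    refine Set.disjoint_left.mp (hM_disj i j hij) (M i).first_mem_support ?_
    rw [← hk₁M i, h, hk₁M j]
    exact (M j).first_mem_support
  have hk₂ : Function.Injective k₂ := fun i j h => by
    by_contra hij
    refine Set.disjoint_left.mp (hM_disj i j hij) (M i).last_mem_support ?_
    rw [← hk₂M i, h, hk₂M j]
    exact (M j).last_mem_support
  have he₁₂ : e₁ ≠ e₂ := Fin.ne_of_val_ne (by omega)
  have hm₁ : posIdx e₂ ≠ posIdx e₁ := Fin.ne_of_val_ne (by simp only [posIdx, ne_eq]; omega)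
  have hm₂ : posIdx e₂ ≠ posIdxSucc e₂ :=
    Fin.ne_of_val_ne (by simp only [posIdx, posIdxSucc, ne_eq]; omega)
  obtain ⟨p, hp_disj, hp⟩ := NodeDisjointFamily.exists_concat
    (X := fun j => PoS.P e₁ (k₁ j)) (M := M) (Y := fun j => PoS.P e₂ (k₂ j))
    (fun i j hij => PoS.P_disjoint _ _ _ _ fun h => hij (hk₁ (congrArg Prod.snd h)))
    hM_disj (fun i j hij => PoS.P_disjoint _ _ _ _ fun h => hij (hk₂ (congrArg Prod.snd h)))
    hk₁M (fun j => (hk₂M j).symm) (fun j => (hM_in j).1)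
    (fun j v hv hvC => PoS.eq_P_last_of_mem_C hm₁ hv hvC)
    (fun j v hv hvC => PoS.eq_P_first_of_mem_C hm₂ hv hvC)
    (fun i j => PoS.disjoint_P_support _ _ he₁₂)
  refine ⟨p, hp_disj, fun j => ?_⟩
  obtain ⟨hfirst, hlast, hsupp⟩ := hp j
  exact ⟨hfirst ▸ hk₁S j, hlast ▸ hk₂T j, k₁ j, k₂ j, hfirst, hlast,
    hsupp.le.trans (Set.union_subset_union_left _ (Set.union_subset_union_right _ (hM_in j).1))⟩

variable {PoS}

lemma Traverses.eq_first_or_last_of_mem_C {p : GraphPath G} {e₁ e₂ : Fin (ℓ - 1)}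
    (hp : PoS.Traverses p e₁ e₂) (he : posIdxSucc e₁ = posIdx e₂) {c : Fin ℓ}
    (hc : c ≠ posIdx e₂) {v : V} (hvp : v ∈ p.support) (hvC : v ∈ (PoS.C c).verts) :
    v = p.first ∨ v = p.last := by
  obtain ⟨k₁, k₂, hfirst, hlast, hsupp⟩ := hp
  rcases hsupp hvp with (hv | hv) | hv
  · exact Or.inl (hfirst ▸ PoS.eq_P_first_of_mem_C (he ▸ hc) hv hvC)
  · exact absurd (PoS.C_disjoint c _ hc) (Set.not_disjoint_iff.mpr ⟨v, hvC, hv⟩)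
  · exact Or.inr (hlast ▸ PoS.eq_P_last_of_mem_C hc hv hvC)

lemma Traverses.disjoint {p q : GraphPath G} {e₁ e₂ e₁' e₂' : Fin (ℓ - 1)}
    (hp : PoS.Traverses p e₁ e₂) (hq : PoS.Traverses q e₁' e₂')
    (he : posIdxSucc e₁ = posIdx e₂) (he' : posIdxSucc e₁' = posIdx e₂') (hlt : e₂ < e₁') :
    Disjoint p.support q.support := by
  obtain ⟨k₁, k₂, -, -, hp⟩ := hp
  obtain ⟨k₁', k₂', -, -, hq⟩ := hq
  have hval : e₁.val + 1 = e₂.val := congrArg Fin.val he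
  have hval' : e₁'.val + 1 = e₂'.val := congrArg Fin.val he'
  have hlt : e₂.val < e₁'.val := hlt
  refine Disjoint.mono hp hq ?_
  simp only [Set.disjoint_union_left, Set.disjoint_union_right]
  refine ⟨⟨⟨⟨PoS.disjoint_P_support _ _ ?_, (PoS.disjoint_P_support_C _ ?_ ?_).symm⟩,
      PoS.disjoint_P_support _ _ ?_⟩,
    ⟨⟨PoS.disjoint_P_support_C _ ?_ ?_, PoS.C_disjoint _ _ ?_⟩,
      PoS.disjoint_P_support_C _ ?_ ?_⟩⟩,
    ⟨⟨PoS.disjoint_P_support _ _ ?_, (PoS.disjoint_P_support_C _ ?_ ?_).symm⟩,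
      PoS.disjoint_P_support _ _ ?_⟩⟩
  all_goals exact Fin.ne_of_val_ne (by simp only [posIdx, posIdxSucc, ne_eq]; omega)

end PathOfSets

section StitchingIndices

variable {ℓ : ℕ}

/-- Counting from `0`, the `i`-th link of the stitched system is made of the old links `2i`
(`stitchLinkIn i`) and `2i + 1` (`stitchLinkOut i`), around the discarded cluster `2i + 1`. -/
def stitchLinkIn (i : Fin ((ℓ + 1) / 2 - 1)) : Fin (ℓ - 1) :=
  ⟨2 * i.val, by have := i.isLt; omega⟩

def stitchLinkOut (i : Fin ((ℓ + 1) / 2 - 1)) : Fin (ℓ - 1) :=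
  ⟨2 * i.val + 1, by have := i.isLt; omega⟩

lemma posIdxSucc_stitchLinkIn (i : Fin ((ℓ + 1) / 2 - 1)) :
    posIdxSucc (stitchLinkIn i) = posIdx (stitchLinkOut i) := rfl

lemma posIdx_stitchLinkIn (i : Fin ((ℓ + 1) / 2 - 1)) :
    posIdx (stitchLinkIn i) = oddIdx (posIdx i) := rfl

lemma posIdxSucc_stitchLinkOut (i : Fin ((ℓ + 1) / 2 - 1)) :
    posIdxSucc (stitchLinkOut i) = oddIdx (posIdxSucc i) :=
  Fin.ext (by simp only [posIdxSucc, stitchLinkOut, oddIdx]; ring)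

lemma stitchLinkOut_lt_stitchLinkIn {i i' : Fin ((ℓ + 1) / 2 - 1)} (h : i < i') :
    stitchLinkOut i < stitchLinkIn i' :=
  Fin.lt_def.mpr (by simp only [stitchLinkOut, stitchLinkIn]; omega)

lemma oddIdx_injective : Function.Injective (oddIdx (ℓ := ℓ)) :=
  fun i i' h => Fin.ext (by have := congrArg Fin.val h; simp only [oddIdx] at this; omega)

lemma oddIdx_ne_posIdx_stitchLinkOut (c : Fin ((ℓ + 1) / 2)) (i : Fin ((ℓ + 1) / 2 - 1)) :
    oddIdx c ≠ posIdx (stitchLinkOut i) :=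
  Fin.ne_of_val_ne (by simp only [oddIdx, posIdx, stitchLinkOut]; omega)

end StitchingIndices

theorem stitching_claim_general {V : Type} [Fintype V] (G : SimpleGraph V)
    (ℓ w w' : ℕ)
    (PoS : PathOfSets G ℓ w) (hstrong : PoS.Strong)
    (A' B' : Fin ((ℓ + 1) / 2) → Set V)
    (hA'sub : ∀ i, A' i ⊆ PoS.A (oddIdx i))
    (hB'sub : ∀ i, B' i ⊆ PoS.B (oddIdx i))
    (hA'card : ∀ i, (A' i).ncard = w')
    (hB'card : ∀ i, (B' i).ncard = w') :
    ∃ Q : PathOfSets G ((ℓ + 1) / 2) w',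
      (∀ i, Q.C i = PoS.C (oddIdx i)) ∧
      (∀ i, Q.A i = A' i) ∧
      (∀ i, Q.B i = B' i) ∧
      ((∀ i, NodeWellLinkedIn G (PoS.C (oddIdx i)) (A' i) ∧
              NodeWellLinkedIn G (PoS.C (oddIdx i)) (B' i) ∧
              NodeLinkedIn G (PoS.C (oddIdx i)) (A' i) (B' i)) →
        Q.Strong) := by
  have hlinks : ∀ i, ∃ p : Fin w' → GraphPath G, NodeDisjointFamily p ∧ ∀ j,
      (p j).first ∈ B' (posIdx i) ∧ (p j).last ∈ A' (posIdxSucc i) ∧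
        PoS.Traverses (p j) (stitchLinkIn i) (stitchLinkOut i) := fun i =>
    PoS.exists_traversing_paths (posIdxSucc_stitchLinkIn i) (hstrong _).2.2
      (posIdx_stitchLinkIn i ▸ hB'sub (posIdx i))
      (posIdxSucc_stitchLinkOut i ▸ hA'sub (posIdxSucc i)) (hB'card _) (hA'card _)
  choose p hp_disj hp using hlinks
  refine ⟨{ C := fun i => PoS.C (oddIdx i)
            A := A'
            B := B'
            P := p
            C_connected := fun i => PoS.C_connected _
            C_disjoint := fun i i' h => PoS.C_disjoint _ _ (oddIdx_injective.ne h)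
            A_sub := fun i => (hA'sub i).trans (PoS.A_sub _)
            B_sub := fun i => (hB'sub i).trans (PoS.B_sub _)
            AB_disjoint := fun i => (PoS.AB_disjoint _).mono (hA'sub i) (hB'sub i)
            A_card := hA'card
            B_card := hB'card
            P_first := fun i j => (hp i j).1
            P_last := fun i j => (hp i j).2.1
            P_disjoint := ?_
            P_internal := fun i j c v hv hvC => (hp i j).2.2.eq_first_or_last_of_mem_C
              (posIdxSucc_stitchLinkIn i) (oddIdx_ne_posIdx_stitchLinkOut c i) hv hvC },
    fun _ => rfl, fun _ => rfl, fun _ => rfl, fun h => h⟩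
  rintro i j i' j' hne
  rcases eq_or_ne i i' with rfl | hi
  · exact hp_disj i j j' fun h => hne (h ▸ rfl)
  rcases hi.lt_or_gt with hlt | hlt
  · exact (hp i j).2.2.disjoint (hp i' j').2.2 (posIdxSucc_stitchLinkIn i)
      (posIdxSucc_stitchLinkIn i') (stitchLinkOut_lt_stitchLinkIn hlt)
  · exact ((hp i' j').2.2.disjoint (hp i j).2.2 (posIdxSucc_stitchLinkIn i')
      (posIdxSucc_stitchLinkIn i) (stitchLinkOut_lt_stitchLinkIn hlt)).symm

/-- Claim 2.5, stitching a Path-of-Sets System: given a strong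
Path-of-Sets System of length `ℓ` and width `w`, and subsets `A'_{2i-1} ⊆ A_{2i-1}`,
`B'_{2i-1} ⊆ B_{2i-1}` of cardinality `w'` each, there is a Path-of-Sets System of
length `⌈ℓ/2⌉` and width `w'` whose clusters are the odd-indexed clusters and whose
nails are the chosen subsets; moreover, it is strong whenever each `A'_{2i-1}` and
`B'_{2i-1}` is node-well-linked and `(A'_{2i-1}, B'_{2i-1})` are node-linked in
`C_{2i-1}`. -/
theorem stitching_claim {V : Type} [Fintype V] (G : SimpleGraph V)
    (ℓ w w' : ℕ) (hℓ : 1 ≤ ℓ) (hw : 1 ≤ w)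
    (PoS : PathOfSets G ℓ w) (hstrong : PoS.Strong)
    (A' B' : Fin ((ℓ + 1) / 2) → Set V)
    (hA'sub : ∀ i, A' i ⊆ PoS.A (oddIdx i))
    (hB'sub : ∀ i, B' i ⊆ PoS.B (oddIdx i))
    (hA'card : ∀ i, (A' i).ncard = w')
    (hB'card : ∀ i, (B' i).ncard = w') :
    ∃ Q : PathOfSets G ((ℓ + 1) / 2) w',
      (∀ i, Q.C i = PoS.C (oddIdx i)) ∧
      (∀ i, Q.A i = A' i) ∧
      (∀ i, Q.B i = B' i) ∧
      ((∀ i, NodeWellLinkedIn G (PoS.C (oddIdx i)) (A' i) ∧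
              NodeWellLinkedIn G (PoS.C (oddIdx i)) (B' i) ∧
              NodeLinkedIn G (PoS.C (oddIdx i)) (A' i) (B' i)) →
        Q.Strong) :=
  stitching_claim_general G ℓ w w' PoS hstrong A' B' hA'sub hB'sub hA'card hB'card
end

section
/- Let H be a graph, A, B, X three disjoint vertex sets of H each of cardinality κ (for integers κ, g ≥ 2) such that every vertex of X has degree 1 in H. Let P be a set of κ node-disjoint paths connecting every vertex of A to a distinct vertex of B, and Q a set of κ node-disjoint paths connecting every vertex of A to a distinct vertex of X; no path of P contains a vertex of X, and every path of Q contains exactly one vertex of X, which serves as its endpoint. Let D be any integer with 1 ≤ D ≤ κ/(2g^2). Then either H contains an (A,B,X)-crossbar of width g^2, or H contains a pseudo-grid of depth D (with respect to P, Q). -/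
open SimpleGraph

/-!
For a set `U` of indices, follow each `Q j` with `j ∈ U` to its last vertex on a path `P k`
with `k ∈ U`; the paths `P k` met in this way form the layer of `U`. If a layer contains `g²`
paths, these paths together with the parts of the corresponding `Q j` from their last hits
form a crossbar. Otherwise remove the layers one after the other, `D` times, starting from all
indices: at most `D g² ≤ κ / 2` indices are removed. For each surviving index `j`, the part of
`Q j` after its last hit on the surviving paths avoids every path outside the layers (P1), and
it passes through the last hit of `Q j` on each earlier layer, which lies further along `Q j`
because the earlier sets of indices are larger (P2).
-/

namespace SimpleGraph.Walk

variable {V : Type*} {G : SimpleGraph V} {u v : V}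

open Classical in
/-- `0` if `p` does not meet `S`. -/
noncomputable def lastIndexIn (p : G.Walk u v) (S : Set V) : ℕ :=
  Nat.findGreatest (fun n => p.getVert n ∈ S) p.length

lemma lastIndexIn_le_length (p : G.Walk u v) (S : Set V) : p.lastIndexIn S ≤ p.length := by
  classical
  exact Nat.findGreatest_le _

lemma getVert_lastIndexIn_mem (p : G.Walk u v) {S : Set V} (hu : u ∈ S) :
    p.getVert (p.lastIndexIn S) ∈ S := by
  classical
  exact Nat.findGreatest_spec (P := fun n => p.getVert n ∈ S) (Nat.zero_le _)
    (by rwa [getVert_zero])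

lemma getVert_notMem_of_lastIndexIn_lt (p : G.Walk u v) {S : Set V} {m : ℕ}
    (hm : p.lastIndexIn S < m) (hml : m ≤ p.length) : p.getVert m ∉ S := by
  classical
  exact Nat.findGreatest_is_greatest hm hml

lemma lastIndexIn_mono (p : G.Walk u v) {S T : Set V} (h : S ⊆ T) :
    p.lastIndexIn S ≤ p.lastIndexIn T := by
  classical
  exact Nat.findGreatest_mono_left (fun n hn => h hn) _

lemma lastIndexIn_lt_length (p : G.Walk u v) {S : Set V} (hu : u ∈ S) (hv : v ∉ S) :
    p.lastIndexIn S < p.length := by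
  refine (p.lastIndexIn_le_length S).lt_of_ne fun h => hv ?_
  simpa [h] using p.getVert_lastIndexIn_mem hu

lemma mem_support_drop_iff (p : G.Walk u v) {n : ℕ} (hn : n ≤ p.length) {x : V} :
    x ∈ (p.drop n).support ↔ ∃ m, n ≤ m ∧ m ≤ p.length ∧ p.getVert m = x := by
  rw [mem_support_iff_exists_getVert]
  constructor
  · rintro ⟨k, rfl, hk⟩
    exact ⟨n + k, by omega, by rw [drop_length] at hk; omega, (drop_getVert _ _ _).symm⟩
  · rintro ⟨m, hnm, hm, rfl⟩
    exact ⟨m - n, by rw [drop_getVert]; congr 1; omega, by rw [drop_length]; omega⟩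

end SimpleGraph.Walk

namespace GraphPath

variable {V : Type} {G : SimpleGraph V}

def drop (q : GraphPath G) (n : ℕ) : GraphPath G :=
  ⟨q.walk.getVert n, q.last, q.walk.drop n, q.isPath.drop n⟩

lemma drop_isSubpathOf (q : GraphPath G) (n : ℕ) : (q.drop n).IsSubpathOf q := by
  simpa [drop, IsSubpathOf] using (List.drop_suffix _ q.walk.support).isInfix

lemma support_drop_subset (q : GraphPath G) (n : ℕ) : (q.drop n).support ⊆ q.support :=
  (q.drop_isSubpathOf n).subset

lemma first_ne_last_of_mem_support {q : GraphPath G} {x : V} (hx : x ∈ q.support)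
    (hxl : x ≠ q.last) : q.first ≠ q.last := by
  obtain ⟨u, v, p, hp⟩ := q
  rintro (rfl : u = v)
  rw [Walk.isPath_iff_nil, Walk.nil_iff_support_eq] at hp
  simp_all [support]

lemma inSubgraph_top (p : GraphPath G) : p.InSubgraph ⊤ :=
  ⟨fun _ _ => trivial, fun _ he => p.walk.edges_subset_edgeSet he⟩

end GraphPath

lemma NodeDisjointFamily.eq_of_mem_support {V ι : Type} {G : SimpleGraph V}
    {P : ι → GraphPath G} (hP : NodeDisjointFamily P) {i j : ι} {x : V}
    (hi : x ∈ (P i).support) (hj : x ∈ (P j).support) : i = j := by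
  by_contra hne
  exact Set.disjoint_left.mp (hP i j hne) hi hj

section Peel

variable {ι : Type} (L : Set ι → Set ι)

def peel : ℕ → Set ι
  | 0 => Set.univ
  | n + 1 => peel n \ L (peel n)

lemma peel_antitone : Antitone (peel L) :=
  antitone_nat_of_succ_le fun _ => Set.sdiff_subset

variable {L}

lemma notMem_layer_peel_of_mem_peel {k : ι} {i n : ℕ} (hk : k ∈ peel L n) (hi : i < n) :
    k ∉ L (peel L i) :=
  (peel_antitone L (Nat.succ_le_of_lt hi) hk).2

lemma mem_peel_of_forall_notMem_layer {k : ι} {n : ℕ} (hk : ∀ i < n, k ∉ L (peel L i)) :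
    k ∈ peel L n := by
  induction n with
  | zero => trivial
  | succ n ih => exact ⟨ih fun i hi => hk i (by omega), hk n (by omega)⟩

lemma pairwise_disjoint_layer_peel (hL : ∀ U, L U ⊆ U) {i j : ℕ} (hij : i ≠ j) :
    Disjoint (L (peel L i)) (L (peel L j)) := by
  wlog h : i < j generalizing i j
  · exact (this hij.symm (by omega)).symm
  exact Set.disjoint_right.mpr fun _ hk => notMem_layer_peel_of_mem_peel (hL _ hk) h

lemma sub_mul_le_ncard_peel [Finite ι] (hL : ∀ U, L U ⊆ U) {n r : ℕ}
    (hr : ∀ i < n, (L (peel L i)).ncard ≤ r) : Nat.card ι - n * r ≤ (peel L n).ncard := by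
  induction n with
  | zero => simp [peel]
  | succ n ih =>
    have hdiff : (peel L (n + 1)).ncard = (peel L n).ncard - (L (peel L n)).ncard :=
      Set.ncard_sdiff (hL _)
    have := ih fun i hi => hr i (by omega)
    have := hr n (by omega)
    rw [hdiff, add_mul, one_mul]
    omega

end Peel

section LastHits

variable {V : Type} {H : SimpleGraph V} {κ : ℕ} (P Q : Fin κ → GraphPath H)

def pathUnion (U : Set (Fin κ)) : Set V := ⋃ k ∈ U, (P k).support

noncomputable def hitIndex (U : Set (Fin κ)) (j : Fin κ) : ℕ :=
  (Q j).walk.lastIndexIn (pathUnion P U)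

noncomputable def hitVert (U : Set (Fin κ)) (j : Fin κ) : V :=
  (Q j).walk.getVert (hitIndex P Q U j)

noncomputable def exitTail (U : Set (Fin κ)) (j : Fin κ) : GraphPath H :=
  (Q j).drop (hitIndex P Q U j + 1)

def layer (U : Set (Fin κ)) : Set (Fin κ) :=
  {k ∈ U | ∃ j ∈ U, hitVert P Q U j ∈ (P k).support}

lemma layer_subset (U : Set (Fin κ)) : layer P Q U ⊆ U := fun _ hk => hk.1

variable {P Q}

lemma mem_pathUnion {U : Set (Fin κ)} {k : Fin κ} {x : V} (hk : k ∈ U)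
    (hx : x ∈ (P k).support) : x ∈ pathUnion P U :=
  Set.mem_biUnion hk hx

lemma last_notMem_pathUnion {X : Set V} (hQlast : ∀ i, (Q i).last ∈ X)
    (hPnoX : ∀ i, ∀ x ∈ X, x ∉ (P i).support) (U : Set (Fin κ)) (j : Fin κ) :
    (Q j).last ∉ pathUnion P U := by
  simp only [pathUnion, Set.mem_iUnion]
  rintro ⟨k, -, hk⟩
  exact hPnoX k _ (hQlast j) hk

lemma first_mem_pathUnion (hQfirst : ∀ i, (Q i).first = (P i).first) {U : Set (Fin κ)}
    {j : Fin κ} (hj : j ∈ U) : (Q j).first ∈ pathUnion P U :=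
  mem_pathUnion hj (hQfirst j ▸ (P j).walk.start_mem_support)

lemma hitVert_mem_pathUnion (hQfirst : ∀ i, (Q i).first = (P i).first) {U : Set (Fin κ)}
    {j : Fin κ} (hj : j ∈ U) : hitVert P Q U j ∈ pathUnion P U :=
  (Q j).walk.getVert_lastIndexIn_mem (first_mem_pathUnion hQfirst hj)

lemma exists_mem_layer_hitVert_mem (hQfirst : ∀ i, (Q i).first = (P i).first)
    {U : Set (Fin κ)} {j : Fin κ} (hj : j ∈ U) :
    ∃ k ∈ layer P Q U, hitVert P Q U j ∈ (P k).support := by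
  obtain ⟨k, hk, hx⟩ := Set.mem_iUnion₂.mp (hitVert_mem_pathUnion hQfirst hj)
  exact ⟨k, ⟨hk, j, hj, hx⟩, hx⟩

lemma eq_hitVert_or_notMem_of_mem_drop_hitIndex {U : Set (Fin κ)} {j : Fin κ} {x : V}
    (hx : x ∈ ((Q j).drop (hitIndex P Q U j)).support) :
    x = hitVert P Q U j ∨ x ∉ pathUnion P U := by
  obtain ⟨m, hm, hml, rfl⟩ :=
    ((Q j).walk.mem_support_drop_iff ((Q j).walk.lastIndexIn_le_length _)).mp hx
  rcases hm.eq_or_lt with h | h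
  · exact .inl (congrArg _ h.symm)
  · exact .inr ((Q j).walk.getVert_notMem_of_lastIndexIn_lt h hml)

lemma disjoint_exitTail_pathUnion (hQfirst : ∀ i, (Q i).first = (P i).first)
    {U : Set (Fin κ)} {j : Fin κ} (hj : j ∈ U) (hlast : (Q j).last ∉ pathUnion P U) :
    Disjoint (exitTail P Q U j).support (pathUnion P U) := by
  have hlt := (Q j).walk.lastIndexIn_lt_length (first_mem_pathUnion hQfirst hj) hlast
  refine Set.disjoint_left.mpr fun x hx => ?_
  obtain ⟨m, hm, hml, rfl⟩ := ((Q j).walk.mem_support_drop_iff hlt).mp hx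
  exact (Q j).walk.getVert_notMem_of_lastIndexIn_lt hm hml

lemma hitVert_mem_exitTail {U W : Set (Fin κ)} (hUW : U ⊆ W) {j : Fin κ}
    (hne : hitVert P Q U j ≠ hitVert P Q W j) :
    hitVert P Q W j ∈ (exitTail P Q U j).support := by
  have hle : hitIndex P Q U j ≤ hitIndex P Q W j :=
    (Q j).walk.lastIndexIn_mono (Set.biUnion_subset_biUnion_left hUW)
  have hlt : hitIndex P Q U j < hitIndex P Q W j :=
    hle.lt_of_ne fun h => hne (congrArg _ h)
  have hW := (Q j).walk.lastIndexIn_le_length (pathUnion P W)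
  exact ((Q j).walk.mem_support_drop_iff (hlt.trans_le hW)).mpr ⟨_, hlt, hW, rfl⟩

end LastHits

section Crossbar

variable {V : Type} {H : SimpleGraph V} {κ : ℕ} {P Q : Fin κ → GraphPath H}

/-- The legs of the crossbar are the parts of `Q j` from their last hits on `U`. -/
lemma nonempty_crossbarIn_of_le_ncard_layer {A B X : Set V} (hPdisj : NodeDisjointFamily P)
    (hQdisj : NodeDisjointFamily Q) (hPfirst : ∀ i, (P i).first ∈ A)
    (hPlast : ∀ i, (P i).last ∈ B) (hQlast : ∀ i, (Q i).last ∈ X) {U : Set (Fin κ)}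
    {ρ : ℕ} (hρ : ρ ≤ (layer P Q U).ncard) : Nonempty (CrossbarIn H ⊤ A B X ρ) := by
  classical
  obtain ⟨e⟩ : Nonempty (Fin ρ ↪ layer P Q U) :=
    Function.Embedding.nonempty_of_card_le (by simpa [Set.ncard_eq_toFinset_card'] using hρ)
  choose j _ hj using fun m => (e m).2.2
  have hkU : ∀ m, (e m : Fin κ) ∈ U := fun m => (e m).2.1
  have he : ∀ {m m'}, m ≠ m' → (e m : Fin κ) ≠ e m' := fun h h' =>
    h (e.injective (Subtype.ext h'))
  have hj_inj : ∀ {m m'}, m ≠ m' → j m ≠ j m' := fun {m m'} h h' =>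
    he h (hPdisj.eq_of_mem_support (hj m) (h' ▸ hj m'))
  have hleg := fun m x (hx : x ∈ ((Q (j m)).drop (hitIndex P Q U (j m))).support) =>
    eq_hitVert_or_notMem_of_mem_drop_hitIndex hx
  refine ⟨⟨fun m => P (e m), fun m => (Q (j m)).drop (hitIndex P Q U (j m)),
    fun _ => GraphPath.inSubgraph_top _, fun _ => GraphPath.inSubgraph_top _,
    fun _ => hPfirst _, fun _ => hPlast _, fun m m' h => hPdisj _ _ (he h),
    fun m m' h => (hQdisj _ _ (hj_inj h)).mono (GraphPath.support_drop_subset _ _)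
      (GraphPath.support_drop_subset _ _),
    fun _ => hQlast _, fun m m' h => Set.disjoint_left.mpr fun x hxP hxQ => ?_,
    fun m => Set.eq_singleton_iff_unique_mem.mpr
      ⟨⟨hj m, Walk.start_mem_support _⟩, ?_⟩⟩⟩
  · rcases hleg m' x hxQ with rfl | hx
    · exact he h (hPdisj.eq_of_mem_support hxP (hj m'))
    · exact hx (mem_pathUnion (hkU m) hxP)
  · rintro x ⟨hxP, hxQ⟩
    exact (hleg m x hxQ).resolve_right fun hx => hx (mem_pathUnion (hkU m) hxP)

end Crossbar

section PseudoGrid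

variable {V : Type} {H : SimpleGraph V} {κ : ℕ} {P Q : Fin κ → GraphPath H}

lemma exists_mem_layer_meets_exitTail (hPdisj : NodeDisjointFamily P)
    (hQfirst : ∀ i, (Q i).first = (P i).first) {i n : ℕ} (hi : i < n) {j : Fin κ}
    (hj : j ∈ peel (layer P Q) n) :
    ∃ k ∈ layer P Q (peel (layer P Q) i),
      hitVert P Q (peel (layer P Q) i) j ∈ (P k).support ∧
      hitVert P Q (peel (layer P Q) i) j ∈ (exitTail P Q (peel (layer P Q) n) j).support := by
  have hUW := peel_antitone (layer P Q) hi.le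
  obtain ⟨k, hk, hkx⟩ := exists_mem_layer_hitVert_mem hQfirst (hUW hj)
  refine ⟨k, hk, hkx, hitVert_mem_exitTail hUW fun h => ?_⟩
  obtain ⟨k', hk', hk'x⟩ := Set.mem_iUnion₂.mp (hitVert_mem_pathUnion hQfirst hj)
  rw [h] at hk'x
  exact notMem_layer_peel_of_mem_peel hk' hi (hPdisj.eq_of_mem_support hkx hk'x ▸ hk)

lemma exists_isPseudoGrid {X : Set V} {g D : ℕ} (hPdisj : NodeDisjointFamily P)
    (hQdisj : NodeDisjointFamily Q) (hQfirst : ∀ i, (Q i).first = (P i).first)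
    (hQlast : ∀ i, (Q i).last ∈ X) (hPnoX : ∀ i, ∀ x ∈ X, x ∉ (P i).support)
    (hQoneX : ∀ i, ∀ x ∈ X, x ∈ (Q i).support → x = (Q i).last) (hD : 1 ≤ D)
    (hlayer : ∀ i < D, (layer P Q (peel (layer P Q) i)).ncard ≤ g ^ 2)
    (hsurv : (κ + 3) / 4 ≤ (peel (layer P Q) D).ncard) :
    ∃ (R : Fin D → Set (Fin κ)) (Q' : Fin ((κ + 3) / 4) → GraphPath H)
      (f : Fin ((κ + 3) / 4) → Fin κ), IsPseudoGrid X g κ D P Q R Q' f := by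
  classical
  set U := peel (layer P Q) D
  obtain ⟨e⟩ : Nonempty (Fin ((κ + 3) / 4) ↪ U) :=
    Function.Embedding.nonempty_of_card_le (by simpa [Set.ncard_eq_toFinset_card'] using hsurv)
  have hfU : ∀ m, (e m : Fin κ) ∈ U := fun m => (e m).2
  have hsub : ∀ m, (exitTail P Q U (e m)).support ⊆ (Q (e m)).support := fun m =>
    GraphPath.support_drop_subset _ _
  refine ⟨fun i => layer P Q (peel (layer P Q) i), fun m => exitTail P Q U (e m),
    fun m => e m,
    fun i i' h => pairwise_disjoint_layer_peel (layer_subset P Q) (Fin.val_ne_of_ne h),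
    fun i => hlayer i i.2, fun m m' h => e.injective (Subtype.ext h),
    fun m i => notMem_layer_peel_of_mem_peel (hfU m) i.2,
    fun m => GraphPath.drop_isSubpathOf _ _, fun m => Or.inr ⟨hQlast _, fun hX => ?_⟩,
    fun m m' h => (hQdisj _ _ fun h' => h (e.injective (Subtype.ext h'))).mono
      (hsub m) (hsub m'),
    fun m k hk => ?_, fun i => ?_⟩
  · obtain ⟨k, hk, hkx, hx⟩ := exists_mem_layer_meets_exitTail hPdisj hQfirst hD (hfU m)
    refine GraphPath.first_ne_last_of_mem_support hx (fun h => ?_)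
      (hQoneX _ _ hX (hsub m (Walk.start_mem_support _)))
    exact last_notMem_pathUnion hQlast hPnoX _ (e m) (h ▸ mem_pathUnion hk.1 hkx)
  · refine (disjoint_exitTail_pathUnion hQfirst (hfU m)
      (last_notMem_pathUnion hQlast hPnoX _ _)).mono_right
      (Set.subset_biUnion_of_mem (u := fun k => (P k).support)
        (mem_peel_of_forall_notMem_layer fun i hi => hk ⟨i, hi⟩))
  · refine ((Set.ncard_eq_zero).mpr (Set.eq_empty_of_forall_notMem fun m hm => ?_)).trans_le
      (Nat.zero_le _)
    obtain ⟨k, hk, hkx, hx⟩ := exists_mem_layer_meets_exitTail hPdisj hQfirst i.2 (hfU m)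
    exact Set.disjoint_left.mp (hm k hk) hx hkx

end PseudoGrid

theorem pseudo_grid_or_crossbar_general {V : Type} (H : SimpleGraph V)
    (A B X : Set V) (κ g D : ℕ) (P Q : Fin κ → GraphPath H)
    (hPdisj : NodeDisjointFamily P) (hQdisj : NodeDisjointFamily Q)
    (hPfirst : ∀ i, (P i).first ∈ A) (hPlast : ∀ i, (P i).last ∈ B)
    (hQfirst : ∀ i, (Q i).first = (P i).first) (hQlast : ∀ i, (Q i).last ∈ X)
    (hPnoX : ∀ i, ∀ x ∈ X, x ∉ (P i).support)
    (hQoneX : ∀ i, ∀ x ∈ X, x ∈ (Q i).support → x = (Q i).last)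
    (hD : 1 ≤ D) (hDκ : 2 * g ^ 2 * D ≤ κ) :
    Nonempty (CrossbarIn H ⊤ A B X (g ^ 2)) ∨
      ∃ (R : Fin D → Set (Fin κ)) (Q' : Fin ((κ + 3) / 4) → GraphPath H)
        (f : Fin ((κ + 3) / 4) → Fin κ),
        IsPseudoGrid X g κ D P Q R Q' f := by
  by_cases hbig : ∃ i < D, g ^ 2 ≤ (layer P Q (peel (layer P Q) i)).ncard
  · obtain ⟨i, -, hi⟩ := hbig
    exact .inl (nonempty_crossbarIn_of_le_ncard_layer hPdisj hQdisj hPfirst hPlast hQlast hi)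
  push Not at hbig
  have hsurv := sub_mul_le_ncard_peel (layer_subset P Q) fun i hi => (hbig i hi).le
  rw [Nat.card_fin] at hsurv
  refine .inr (exists_isPseudoGrid hPdisj hQdisj hQfirst hQlast hPnoX hQoneX hD
    (fun i hi => (hbig i hi).le) ?_)
  have : 2 * (D * g ^ 2) ≤ κ := by linarith
  omega

/-- Theorem 4.2: given disjoint sets `A, B, X` of cardinality `κ`
each, with every vertex of `X` of degree `1`, a set `P` of `κ` node-disjoint paths
connecting every vertex of `A` to a distinct vertex of `B` (avoiding `X`), a set
`Q` of `κ` node-disjoint paths connecting every vertex of `A` to a distinct vertex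
of `X` (each containing exactly one vertex of `X`, as an endpoint), and any integer
`1 ≤ D ≤ κ / (2 g²)`, either `H` contains an `(A, B, X)`-crossbar of width `g²`, or
`H` contains a pseudo-grid of depth `D` with respect to `P, Q`. -/
theorem pseudo_grid_or_crossbar {V : Type} [Fintype V] (H : SimpleGraph V)
    (A B X : Set V) (κ g D : ℕ) (hg : 2 ≤ g) (hκ : 2 ≤ κ)
    (hAB : Disjoint A B) (hAX : Disjoint A X) (hBX : Disjoint B X)
    (hAcard : A.ncard = κ) (hBcard : B.ncard = κ) (hXcard : X.ncard = κ)
    (hXdeg : ∀ x ∈ X, (H.neighborSet x).ncard = 1)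
    (P Q : Fin κ → GraphPath H)
    (hPdisj : NodeDisjointFamily P) (hQdisj : NodeDisjointFamily Q)
    (hPfirst : ∀ i, (P i).first ∈ A) (hPlast : ∀ i, (P i).last ∈ B)
    (hQfirst : ∀ i, (Q i).first = (P i).first) (hQlast : ∀ i, (Q i).last ∈ X)
    (hPontoA : ∀ a ∈ A, ∃ i, (P i).first = a)
    (hPnoX : ∀ i, ∀ x ∈ X, x ∉ (P i).support)
    (hQoneX : ∀ i, ∀ x ∈ X, x ∈ (Q i).support → x = (Q i).last)
    (hD : 1 ≤ D) (hDκ : 2 * g ^ 2 * D ≤ κ) :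
    Nonempty (CrossbarIn H ⊤ A B X (g ^ 2)) ∨
      ∃ (R : Fin D → Set (Fin κ)) (Q' : Fin ((κ + 3) / 4) → GraphPath H)
        (f : Fin ((κ + 3) / 4) → Fin κ),
        IsPseudoGrid X g κ D P Q R Q' f :=
  pseudo_grid_or_crossbar_general H A B X κ g D P Q hPdisj hQdisj hPfirst hPlast hQfirst hQlast
    hPnoX hQoneX hD hDκ
end

section
/- Let H be a graph with disjoint vertex sets A, B, X, each of cardinality κ, with every vertex of X of degree 1 in H. Among all pairs (P, Q), where P is a set of κ node-disjoint paths connecting every vertex of A to a distinct vertex of B and Q is a set of κ node-disjoint paths connecting every vertex of A to a distinct vertex of X, let (P, Q) be a pair minimizing the number of edges of the graph H(P,Q) = ⋃_{P ∈ P ∪ Q} P. Let R ⊆ P, let P' = P∖R, let A' ⊆ A and B' ⊆ B be the sets of endpoints of the paths of R in A and B respectively, and let Q* be any set of node-disjoint paths, each a subpath of some path of {Q_P : P ∈ P'}, such that the paths of Q* are completely disjoint from the paths of P'. Let H' be the union of all paths in R and all paths in Q*. Then for any edge e of H' lying on a path of R but lying on no path of Q, the largest number of node-disjoint paths connecting vertices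 of A' to vertices of B' in H'∖{e} is at most |R| − 1. -/
open SimpleGraph

/-!
Suppose `H' ∖ {e}` contained `|R|` node-disjoint `A'`–`B'` paths. Their first vertices are
distinct, so they start at all of `A'`, and they avoid the paths of `P ∖ R`; replacing the
paths of `R` by them therefore gives a valid pair `(P₂, Q)`. Every edge of the new paths lies
on a path of `R` or on a subpath of a `Q`-path, so `H(P₂, Q) ⊆ H(P, Q) ∖ {e}`, contradicting
the minimality of `(P, Q)`.
-/

namespace GraphPath

variable {V : Type} {G : SimpleGraph V}

lemma finite_edges (p : GraphPath G) : p.edges.Finite :=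
  List.finite_toSet p.walk.edges

lemma IsSubpathOf.edges_subset {p q : GraphPath G} (h : p.IsSubpathOf q) :
    p.edges ⊆ q.edges :=
  fun _ he => (Walk.isSubwalk_iff_support_isInfix.mpr h).edges_subset he

lemma disjoint_edges_of_disjoint_support {p q : GraphPath G}
    (h : Disjoint p.support q.support) : Disjoint p.edges q.edges := by
  refine Set.disjoint_left.mpr fun e hp hq => ?_
  induction e using Sym2.ind with
  | _ a b =>
    exact Set.disjoint_left.mp h (Walk.fst_mem_support_of_mem_edges _ hp)
      (Walk.fst_mem_support_of_mem_edges _ hq)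

end GraphPath

section LinkPair

variable {V : Type} {G : SimpleGraph V}

lemma NodeDisjointFamily.injective_first {ι : Type} {P : ι → GraphPath G}
    (hP : NodeDisjointFamily P) : Function.Injective fun i => (P i).first := by
  intro i j hij
  by_contra hne
  have hmem : (P i).first ∈ (P j).support := by
    simpa only [hij] using (P j).first_mem_support
  exact Set.disjoint_left.mp (hP i j hne) (P i).first_mem_support hmem

lemma NodeDisjointFamily.forall_exists_first_eq {ι : Type} {n : ℕ} {F : Fin n → GraphPath G}
    (hF : NodeDisjointFamily F) {R : Set ι} (hR : R.Finite) {p : ι → V}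
    (hFp : ∀ j, ∃ i ∈ R, (F j).first = p i) (hRn : R.ncard ≤ n) :
    ∀ i ∈ R, ∃ j, (F j).first = p i := by
  have hsub : Set.range (fun j => (F j).first) ⊆ p '' R := by
    rintro _ ⟨j, rfl⟩
    obtain ⟨i, hi, hji⟩ := hFp j
    exact ⟨i, hi, hji.symm⟩
  have hcard : (p '' R).ncard ≤ (Set.range fun j => (F j).first).ncard := by
    rw [Set.ncard_range_of_injective hF.injective_first, Nat.card_eq_fintype_card,
      Fintype.card_fin]
    exact (Set.ncard_image_le hR).trans hRn
  intro i hi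
  exact (Set.eq_of_subset_of_ncard_le hsub hcard (hR.image p)).superset
    (Set.mem_image_of_mem p hi)

lemma finite_linkPairEdges {κ : ℕ} (P Q : Fin κ → GraphPath G) :
    (LinkPairEdges P Q).Finite :=
  (Set.finite_iUnion fun i => (P i).finite_edges).union
    (Set.finite_iUnion fun i => (Q i).finite_edges)

variable {A B X : Set V} {κ : ℕ} {P Q P₂ : Fin κ → GraphPath G} {R : Set (Fin κ)}

lemma ValidLinkPair.of_reroute (hv : ValidLinkPair G A B X κ P Q)
    (hcompl : ∀ i ∉ R, P₂ i = P i) (hfirst : ∀ i ∈ R, (P₂ i).first = (P i).first)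
    (hlast : ∀ i ∈ R, (P₂ i).last ∈ B)
    (hdisj : ∀ i ∈ R, ∀ j ∈ R, i ≠ j → Disjoint (P₂ i).support (P₂ j).support)
    (hsep : ∀ i ∈ R, ∀ k ∉ R, Disjoint (P₂ i).support (P k).support) :
    ValidLinkPair G A B X κ P₂ Q := by
  obtain ⟨hPnd, hQnd, hPAB, hQAX, hPA, hQA⟩ := hv
  have hfirst' : ∀ i, (P₂ i).first = (P i).first := fun i => by
    by_cases hi : i ∈ R
    · exact hfirst i hi
    · rw [hcompl i hi]
  refine ⟨?_, hQnd, fun i => ⟨hfirst' i ▸ (hPAB i).1, ?_⟩, hQAX,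
    fun a ha => (hPA a ha).imp fun i hi => (hfirst' i).trans hi, hQA⟩
  · intro i j hij
    by_cases hi : i ∈ R <;> by_cases hj : j ∈ R
    · exact hdisj i hi j hj hij
    · exact hcompl j hj ▸ hsep i hi j hj
    · exact hcompl i hi ▸ (hsep j hj i hi).symm
    · exact hcompl i hi ▸ hcompl j hj ▸ hPnd i j hij
  · by_cases hi : i ∈ R
    · exact hlast i hi
    · exact hcompl i hi ▸ (hPAB i).2

lemma linkPairEdges_ssubset_of_reroute {e : Sym2 V} (hPnd : NodeDisjointFamily P)
    (hcompl : ∀ i ∉ R, P₂ i = P i)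
    (hedges : ∀ i ∈ R, (P₂ i).edges ⊆ LinkPairEdges P Q \ {e})
    (heR : ∃ i ∈ R, e ∈ (P i).edges) (heQ : ∀ i, e ∉ (Q i).edges) :
    LinkPairEdges P₂ Q ⊂ LinkPairEdges P Q := by
  obtain ⟨i₀, hi₀, hei₀⟩ := heR
  have he : e ∈ LinkPairEdges P Q := Or.inl (Set.mem_iUnion_of_mem i₀ hei₀)
  suffices hsub : LinkPairEdges P₂ Q ⊆ LinkPairEdges P Q \ {e} from
    (Set.ssubset_iff_of_subset (hsub.trans Set.sdiff_subset)).mpr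
      ⟨e, he, fun h => (hsub h).2 rfl⟩
  refine Set.union_subset (Set.iUnion_subset fun i => ?_) (Set.iUnion_subset fun i => ?_)
  · by_cases hi : i ∈ R
    · exact hedges i hi
    have hne : e ∉ (P i).edges := Set.disjoint_left.mp
      (GraphPath.disjoint_edges_of_disjoint_support (hPnd i₀ i (ne_of_mem_of_not_mem hi₀ hi)))
      hei₀
    rw [hcompl i hi]
    exact fun f hf => ⟨Or.inl (Set.mem_iUnion_of_mem i hf), fun hfe => hne (hfe ▸ hf)⟩
  · exact fun f hf => ⟨Or.inr (Set.mem_iUnion_of_mem i hf), fun hfe => heQ i (hfe ▸ hf)⟩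

end LinkPair

theorem minimal_pair_unique_linkage_general {V : Type} (H : SimpleGraph V)
    (A B X : Set V) (κ : ℕ)
    (P Q : Fin κ → GraphPath H)
    (hvalid : ValidLinkPair H A B X κ P Q)
    (hmin : ∀ P₂ Q₂ : Fin κ → GraphPath H, ValidLinkPair H A B X κ P₂ Q₂ →
      (LinkPairEdges P Q).ncard ≤ (LinkPairEdges P₂ Q₂).ncard)
    (Rset : Set (Fin κ))
    (Qstar : Set (GraphPath H))
    (hQstarSub : ∀ q ∈ Qstar, ∃ i ∉ Rset, q.IsSubpathOf (Q i))
    (hQstarP' : ∀ q ∈ Qstar, ∀ i ∉ Rset, Disjoint q.support (P i).support)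
    (e : Sym2 V)
    (heR : ∃ i ∈ Rset, e ∈ (P i).edges)
    (heQ : ∀ i, e ∉ (Q i).edges)
    (n : ℕ) (F : Fin n → GraphPath H)
    (hFdisj : NodeDisjointFamily F)
    (hFfirst : ∀ j, ∃ i ∈ Rset, (F j).first = (P i).first)
    (hFlast : ∀ j, ∃ i ∈ Rset, (F j).last = (P i).last)
    (hFsupp : ∀ j, (F j).support ⊆
      (⋃ i ∈ Rset, (P i).support) ∪ ⋃ q ∈ Qstar, q.support)
    (hFedges : ∀ j, (F j).edges ⊆
      ((⋃ i ∈ Rset, (P i).edges) ∪ ⋃ q ∈ Qstar, q.edges) \ {e}) :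
    n < Rset.ncard := by
  classical
  by_contra! hle
  obtain ⟨hPnd, -, hPAB, -⟩ := id hvalid
  choose σ hσ using hFdisj.forall_exists_first_eq Rset.toFinite hFfirst hle
  let P₂ : Fin κ → GraphPath H := fun i => if hi : i ∈ Rset then F (σ i hi) else P i
  have hP₂ : ∀ i (hi : i ∈ Rset), P₂ i = F (σ i hi) := fun i hi => dif_pos hi
  have hcompl : ∀ i ∉ Rset, P₂ i = P i := fun i hi => dif_neg hi
  have hFsep : ∀ j, ∀ k ∉ Rset, Disjoint (F j).support (P k).support := fun j k hk =>
    (Set.disjoint_union_left.mpr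
      ⟨Set.disjoint_iUnion₂_left.mpr fun i hi => hPnd i k (ne_of_mem_of_not_mem hi hk),
        Set.disjoint_iUnion₂_left.mpr fun q hq => hQstarP' q hq k hk⟩).mono_left (hFsupp j)
  have hFedges' : ∀ j, (F j).edges ⊆ LinkPairEdges P Q \ {e} := fun j =>
    (hFedges j).trans <| Set.sdiff_subset_sdiff_left <| Set.union_subset_union
      (Set.iUnion₂_subset fun i _ => Set.subset_iUnion (fun i => (P i).edges) i)
      (Set.iUnion₂_subset fun q hq => (hQstarSub q hq).elim fun i hi =>
        hi.2.edges_subset.trans (Set.subset_iUnion (fun i => (Q i).edges) i))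
  have hvalid₂ : ValidLinkPair H A B X κ P₂ Q := by
    refine hvalid.of_reroute hcompl (fun i hi => by rw [hP₂ i hi, hσ]) (fun i hi => ?_)
      (fun i hi j hj hij => ?_) (fun i hi k hk => hP₂ i hi ▸ hFsep _ k hk)
    · obtain ⟨i', -, hlast⟩ := hFlast (σ i hi)
      exact hP₂ i hi ▸ hlast ▸ (hPAB i').2
    · rw [hP₂ i hi, hP₂ j hj]
      refine hFdisj _ _ fun hσij => hij (hPnd.injective_first ?_)
      simpa only [hσ] using congrArg (fun j => (F j).first) hσij
  have hlt := Set.ncard_lt_ncard (linkPairEdges_ssubset_of_reroute hPnd hcompl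
    (fun i hi => hP₂ i hi ▸ hFedges' _) heR heQ) (finite_linkPairEdges P Q)
  exact (hmin P₂ Q hvalid₂).not_gt hlt

/-- Observation 4.3: if `(P, Q)` is a pair of path families
minimizing the number of edges of `H(P, Q)`, `R ⊆ P` is any subset of paths with
endpoint sets `A' ⊆ A`, `B' ⊆ B`, and `Q*` is any set of node-disjoint paths, each
a subpath of a `Q`-path of `P∖R` and completely disjoint from the paths of `P∖R`,
then, letting `H'` be the union of the paths of `R` and of `Q*`, for every edge `e`
of `H'` lying on a path of `R` but on no path of `Q`, every family of node-disjoint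
`A'`–`B'` paths in `H'∖{e}` has fewer than `|R|` paths. -/
theorem minimal_pair_unique_linkage {V : Type} [Fintype V] (H : SimpleGraph V)
    (A B X : Set V) (κ : ℕ)
    (hAB : Disjoint A B) (hAX : Disjoint A X) (hBX : Disjoint B X)
    (hAcard : A.ncard = κ) (hBcard : B.ncard = κ) (hXcard : X.ncard = κ)
    (hXdeg : ∀ x ∈ X, (H.neighborSet x).ncard = 1)
    (P Q : Fin κ → GraphPath H)
    (hvalid : ValidLinkPair H A B X κ P Q)
    (hpair : ∀ i, (Q i).first = (P i).first)
    (hmin : ∀ P₂ Q₂ : Fin κ → GraphPath H, ValidLinkPair H A B X κ P₂ Q₂ →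
      (LinkPairEdges P Q).ncard ≤ (LinkPairEdges P₂ Q₂).ncard)
    (Rset : Set (Fin κ))
    (Qstar : Set (GraphPath H))
    (hQstarDisj : Qstar.Pairwise fun p q => Disjoint p.support q.support)
    (hQstarSub : ∀ q ∈ Qstar, ∃ i ∉ Rset, q.IsSubpathOf (Q i))
    (hQstarP' : ∀ q ∈ Qstar, ∀ i ∉ Rset, Disjoint q.support (P i).support)
    (e : Sym2 V)
    (heR : ∃ i ∈ Rset, e ∈ (P i).edges)
    (heQ : ∀ i, e ∉ (Q i).edges)
    (n : ℕ) (F : Fin n → GraphPath H)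
    (hFdisj : NodeDisjointFamily F)
    (hFfirst : ∀ j, ∃ i ∈ Rset, (F j).first = (P i).first)
    (hFlast : ∀ j, ∃ i ∈ Rset, (F j).last = (P i).last)
    (hFsupp : ∀ j, (F j).support ⊆
      (⋃ i ∈ Rset, (P i).support) ∪ ⋃ q ∈ Qstar, q.support)
    (hFedges : ∀ j, (F j).edges ⊆
      ((⋃ i ∈ Rset, (P i).edges) ∪ ⋃ q ∈ Qstar, q.edges) \ {e}) :
    n < Rset.ncard :=
  minimal_pair_unique_linkage_general H A B X κ P Q hvalid hmin Rset Qstar hQstarSub hQstarP' e heR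
    heQ n F hFdisj hFfirst hFlast hFsupp hFedges
end

section
/- Let Ĝ be a graph and Â, B̂ ⊆ V(Ĝ) two subsets of its vertices with |Â| = |B̂|, such that Ĝ has the perfect unique linkage property with respect to (Â, B̂), with the unique (Â,B̂)-linkage denoted by R̂ (each path directed from its Â-endpoint to its B̂-endpoint). Then there is a bijection μ: V(Ĝ) → {1,…,|V(Ĝ)|} with the following properties. For each integer t > 0, let S_t contain, for every path R ∈ R̂, the first vertex v on R with μ(v) ≥ t, or the last vertex of R if no such vertex exists; let Y_t = {v ∈ V(Ĝ) : μ(v) < t} and Z_t = {v ∈ V(Ĝ) : μ(v) ≥ t}. Then: (1) for each path R ∈ R̂ and every pair v, v' of its vertices with v' appearing strictly before v on R, μ(v') < μ(v); and (2) for every integer 0 < t ≤ |V(Ĝ)|, the graph Ĝ∖S_t contains no path connecting a vertex of Y_t to a vertex of Z_t. -/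
/-!
The numbering is built greedily: `Y_t` grows one vertex at a time while staying an initial
segment of every path of `R` such that every edge leaving `Y_t` meets the frontier `S_t`.
The vertex added next is the first vertex `s` outside `Y` on some path whose neighbours
outside `Y ∪ {s}` all lie in the new frontier. If there were no such path, every unfinished
path `p` would have a blocking edge `s_p z_p` ending on some path `J p`; following `J` gives a
cycle of paths, and rerouting each `p` of the cycle through `s_p z_p` onto the tail of `J p`
yields a second `(A, B)`-linkage, contradicting uniqueness.
-/

open SimpleGraph

namespace GraphPath

variable {V : Type} {G : SimpleGraph V} [DecidableEq V]

def index (p : GraphPath G) (v : V) : ℕ := p.walk.support.idxOf v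

theorem beforeOn_iff {p : GraphPath G} {u v : V} :
    beforeOn p u v ↔ u ∈ p.support ∧ v ∈ p.support ∧ p.index u < p.index v := by
  have hnd := p.isPath.support_nodup
  simp only [beforeOn, index, support, Set.mem_ofPred_eq]
  generalize p.walk.support = l at hnd ⊢
  constructor
  · rintro ⟨l₁, l₂, l₃, rfl⟩
    grind
  · rintro ⟨hu, hv, hlt⟩
    have hul := List.idxOf_lt_length_iff.2 hu
    have hv' : v ∈ l.drop (l.idxOf u + 1) := by
      have := List.take_append_drop (l.idxOf u + 1) l
      grind [List.mem_take_iff_idxOf_lt]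
    obtain ⟨l₂, l₃, h⟩ := List.append_of_mem hv'
    refine ⟨l.take (l.idxOf u), l₂, l₃, ?_⟩
    conv_lhs => rw [← List.take_append_drop (l.idxOf u) l]
    rw [List.drop_eq_getElem_cons hul, List.getElem_idxOf, h]

theorem eq_of_index_eq {p : GraphPath G} {u v : V} (hu : u ∈ p.support)
    (h : p.index u = p.index v) : u = v :=
  (List.idxOf_inj hu).1 h

def prefixTo (p : GraphPath G) (s : V) : Set V := {x ∈ p.support | p.index x ≤ p.index s}

def suffixFrom (p : GraphPath G) (z : V) : Set V := {x ∈ p.support | p.index z ≤ p.index x}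

theorem mem_support_takeUntil {p : GraphPath G} {s x : V} (hs : s ∈ p.walk.support) :
    x ∈ (p.walk.takeUntil s hs).support ↔ x ∈ p.prefixTo s := by
  rw [Walk.takeUntil_eq_take, Walk.support_copy, Walk.support_take]
  simp only [prefixTo, index, support, Set.mem_ofPred_eq]
  constructor
  · intro hx
    have hx' := List.mem_of_mem_take hx
    exact ⟨hx', by grind [List.mem_take_iff_idxOf_lt]⟩
  · rintro ⟨hx, hle⟩
    rw [List.mem_take_iff_idxOf_lt hx]
    omega

theorem mem_support_dropUntil {p : GraphPath G} {z x : V} (hz : z ∈ p.walk.support) :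
    x ∈ (p.walk.dropUntil z hz).support ↔ x ∈ p.suffixFrom z := by
  have hnd := p.isPath.support_nodup
  have hlen : p.walk.support.idxOf z ≤ p.walk.length := by
    have := List.idxOf_lt_length_iff.2 hz
    rw [Walk.length_support] at this
    omega
  rw [Walk.dropUntil_eq_drop, Walk.support_copy, Walk.drop_support_eq_support_drop_min,
    min_eq_left hlen]
  simp only [suffixFrom, index, support, Set.mem_ofPred_eq]
  generalize p.walk.support = l at hnd hz ⊢
  have := List.take_append_drop (l.idxOf z) l
  constructor
  · intro hx
    have hx' := List.mem_of_mem_drop hx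
    refine ⟨hx', ?_⟩
    by_contra hlt
    have := (List.mem_take_iff_idxOf_lt (n := l.idxOf z) hx').2 (by omega)
    grind
  · rintro ⟨hx, hle⟩
    grind [List.mem_take_iff_idxOf_lt]

theorem exists_splice (p q : GraphPath G) {s z : V} (hs : s ∈ p.walk.support)
    (hz : z ∈ q.walk.support) (hsz : G.Adj s z) (hd : Disjoint (p.prefixTo s) (q.suffixFrom z)) :
    ∃ r : GraphPath G, r.first = p.first ∧ r.last = q.last ∧
      r.support = p.prefixTo s ∪ q.suffixFrom z := by
  set w := (p.walk.takeUntil s hs).append (.cons hsz (q.walk.dropUntil z hz))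
  have hw : w.support = (p.walk.takeUntil s hs).support ++ (q.walk.dropUntil z hz).support := by
    rw [Walk.support_append, Walk.support_cons, List.tail_cons]
  have hpath : w.IsPath := by
    rw [Walk.isPath_def, hw, List.nodup_append]
    refine ⟨(p.isPath.takeUntil hs).support_nodup, (q.isPath.dropUntil hz).support_nodup, ?_⟩
    rintro x hx _ hx' rfl
    exact Set.disjoint_left.1 hd ((mem_support_takeUntil hs).1 hx)
      ((mem_support_dropUntil hz).1 hx')
  refine ⟨⟨p.first, q.last, w, hpath⟩, rfl, rfl, Set.ext fun x => ?_⟩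
  simp only [support, Set.mem_ofPred_eq, hw, List.mem_append, mem_support_takeUntil,
    mem_support_dropUntil, Set.mem_union]

end GraphPath

theorem Set.Finite.exists_bijOn_of_mapsTo {α : Type*} {f : α → α} {S : Set α} (hS : S.Finite)
    (hne : S.Nonempty) (hf : Set.MapsTo f S S) :
    ∃ C ⊆ S, C.Nonempty ∧ Set.BijOn f C C := by
  open Function in
  refine ⟨S ∩ periodicPts f, Set.inter_subset_left, ?_, ?_, ?_, ?_⟩
  · obtain ⟨x, hx⟩ := hne
    obtain ⟨m, n, hmn, hmn'⟩ := hS.exists_lt_map_eq_of_forall_mem (f := (f^[·] x))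
      (fun n => hf.iterate n hx)
    refine ⟨f^[m] x, hf.iterate m hx, mk_mem_periodicPts (n := n - m) (by omega) ?_⟩
    rw [IsPeriodicPt, IsFixedPt, ← iterate_add_apply, Nat.sub_add_cancel hmn.le, hmn']
  · exact fun x hx => ⟨hf hx.1, (bijOn_periodicPts (f := f)).mapsTo hx.2⟩
  · exact (bijOn_periodicPts (f := f)).injOn.mono Set.inter_subset_right
  · rintro y ⟨hyS, hy⟩
    obtain ⟨n, hn, hyn⟩ := mem_periodicPts.1 hy
    refine ⟨f^[n - 1] y, ⟨hf.iterate _ hyS, mk_mem_periodicPts hn (hyn.apply_iterate _)⟩, ?_⟩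
    rw [← iterate_succ_apply' f, Nat.succ_eq_add_one, Nat.sub_add_cancel hn]
    exact hyn

theorem List.Nodup.forall_mem_iff_length_eq_card {α : Type*} [Fintype α] [DecidableEq α]
    {L : List α} (hL : L.Nodup) : (∀ a, a ∈ L) ↔ L.length = Fintype.card α := by
  rw [← List.toFinset_card_of_nodup hL, Finset.card_eq_iff_eq_univ, Finset.eq_univ_iff_forall]
  simp only [List.mem_toFinset]

section Linkages

variable {V : Type} {G : SimpleGraph V}

theorem beforeOn.mem_support_right {p : GraphPath G} {u v : V} (h : beforeOn p u v) :
    v ∈ p.support := by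
  obtain ⟨l₁, l₂, l₃, h⟩ := h
  simp [GraphPath.support, h]

theorem beforeOn.ne {p : GraphPath G} {u v : V} (h : beforeOn p u v) : u ≠ v := by
  classical
  rintro rfl
  exact lt_irrefl _ (GraphPath.beforeOn_iff.1 h).2.2

theorem finite_of_pairwise_disjoint_support [Finite V] {R : Set (GraphPath G)}
    (hR : R.Pairwise fun p q => Disjoint p.support q.support) : R.Finite := by
  refine Set.Finite.of_finite_image (f := GraphPath.first) (Set.toFinite _) ?_
  intro p hp q hq h
  by_contra hne
  refine Set.disjoint_left.1 (hR hp hq hne) p.walk.start_mem_support ?_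
  rw [show p.first = q.first from h]
  exact q.walk.start_mem_support

theorem eq_of_mem_support_of_mem_support {R : Set (GraphPath G)}
    (hR : R.Pairwise fun p q => Disjoint p.support q.support) {p q : GraphPath G} (hp : p ∈ R)
    (hq : q ∈ R) {x : V} (hxp : x ∈ p.support) (hxq : x ∈ q.support) : p = q := by
  by_contra hne
  exact Set.disjoint_left.1 (hR hp hq hne) hxp hxq

theorem IsLinkage.reroute {A B : Set V} {R C : Set (GraphPath G)} (hR : IsLinkage A B R)
    (hCR : C ⊆ R) {J : GraphPath G → GraphPath G} (hJ : Set.BijOn J C C)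
    (r : GraphPath G → GraphPath G) (hfirst : ∀ p ∈ C, (r p).first = p.first)
    (hlast : ∀ p ∈ C, (r p).last = (J p).last)
    (hsub : ∀ p ∈ C, (r p).support ⊆ p.support ∪ (J p).support)
    (hdisj : C.Pairwise fun p q => Disjoint (r p).support (r q).support) :
    IsLinkage A B ((R \ C) ∪ r '' C) := by
  obtain ⟨hpair, hends, hA, hB⟩ := hR
  refine ⟨Set.PairwiseDisjoint.union (hpair.mono Set.sdiff_subset)
    (Set.Pairwise.image (f := r) (r := Function.onFun Disjoint GraphPath.support) hdisj) ?_,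
    ?_, ?_, ?_⟩
  · rintro p ⟨hpR, hpC⟩ _ ⟨q, hq, rfl⟩ -
    refine Disjoint.mono_right (hsub q hq) (Disjoint.union_right ?_ ?_)
    · exact hpair hpR (hCR hq) (ne_of_mem_of_not_mem hq hpC).symm
    · exact hpair hpR (hCR (hJ.mapsTo hq)) (ne_of_mem_of_not_mem (hJ.mapsTo hq) hpC).symm
  · rintro _ (⟨hp, -⟩ | ⟨p, hp, rfl⟩)
    · exact hends _ hp
    · rw [hfirst p hp, hlast p hp]
      exact ⟨(hends p (hCR hp)).1, (hends _ (hCR (hJ.mapsTo hp))).2⟩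
  · intro a ha
    obtain ⟨p, hp, rfl⟩ := hA a ha
    by_cases hpC : p ∈ C
    · exact ⟨r p, .inr ⟨p, hpC, rfl⟩, hfirst p hpC⟩
    · exact ⟨p, .inl ⟨hp, hpC⟩, rfl⟩
  · intro b hb
    obtain ⟨p, hp, rfl⟩ := hB b hb
    by_cases hpC : p ∈ C
    · obtain ⟨p', hp', rfl⟩ := hJ.surjOn hpC
      exact ⟨r p', .inr ⟨p', hp', rfl⟩, hlast p' hp'⟩
    · exact ⟨p, .inl ⟨hp, hpC⟩, rfl⟩

end Linkages

section Frontier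

variable {V : Type} {G : SimpleGraph V}

def IsFirstOutside (p : GraphPath G) (Y : Set V) (s : V) : Prop :=
  s ∈ p.support ∧ s ∉ Y ∧ ∀ u, beforeOn p u s → u ∈ Y

/-- For `Y = Y_t` this is the separator `S_t` of the numbering lemma. -/
def linkageFrontier (R : Set (GraphPath G)) (Y : Set V) : Set V :=
  {v | ∃ p ∈ R, IsFirstOutside p Y v ∨ (v = p.last ∧ p.support ⊆ Y)}

structure IsSeparatedPrefix (R : Set (GraphPath G)) (Y : Set V) : Prop where
  mem_of_beforeOn : ∀ p ∈ R, ∀ u v, beforeOn p u v → v ∈ Y → u ∈ Y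
  adj_mem_frontier : ∀ u v, G.Adj u v → u ∈ Y → v ∉ Y →
    u ∈ linkageFrontier R Y ∨ v ∈ linkageFrontier R Y

def Blocks (R : Set (GraphPath G)) (Y : Set V) (s z : V) : Prop :=
  G.Adj s z ∧ z ∉ insert s Y ∧ z ∉ linkageFrontier R (insert s Y)

variable {R : Set (GraphPath G)} {Y : Set V}

theorem isSeparatedPrefix_empty (R : Set (GraphPath G)) : IsSeparatedPrefix R (∅ : Set V) :=
  ⟨fun _ _ _ _ _ hv => hv.elim, fun _ _ _ hu _ => hu.elim⟩

theorem mem_linkageFrontier_insert {s x : V} (hx : x ∈ linkageFrontier R Y) (hxs : x ≠ s) :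
    x ∈ linkageFrontier R (insert s Y) := by
  obtain ⟨p, hp, ⟨hxp, hxY, hbefore⟩ | ⟨rfl, hsub⟩⟩ := hx
  · exact ⟨p, hp, .inl ⟨hxp, by simp [hxs, hxY], fun u hu => .inr (hbefore u hu)⟩⟩
  · exact ⟨p, hp, .inr ⟨rfl, hsub.trans (Set.subset_insert s Y)⟩⟩

theorem IsSeparatedPrefix.insert_of_not_blocks (hY : IsSeparatedPrefix R Y)
    (hR : R.Pairwise fun p q => Disjoint p.support q.support) {p : GraphPath G} (hp : p ∈ R)
    {s : V} (hs : IsFirstOutside p Y s) (hunblocked : ∀ z, ¬ Blocks R Y s z) :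
    IsSeparatedPrefix R (insert s Y) := by
  refine ⟨fun p' hp' u v huv hv => ?_, fun u v huv hu hv => ?_⟩
  · obtain rfl | hvY := hv
    · obtain rfl : p' = p :=
        eq_of_mem_support_of_mem_support hR hp' hp huv.mem_support_right hs.1
      exact .inr (hs.2.2 u huv)
    · exact .inr (hY.mem_of_beforeOn p' hp' u v huv hvY)
  · have hvs : v ≠ s := fun h => hv (.inl h)
    obtain rfl | huY := hu
    · by_contra hfr
      exact hunblocked v ⟨huv, hv, fun h => hfr (.inr h)⟩
    · have hus : u ≠ s := fun h => hs.2.1 (h ▸ huY)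
      refine (hY.adj_mem_frontier u v huv huY fun h => hv (.inr h)).imp ?_ ?_
      · exact fun h => mem_linkageFrontier_insert h hus
      · exact fun h => mem_linkageFrontier_insert h hvs

theorem Blocks.exists_beforeOn {s z : V} (h : Blocks R Y s z) {p : GraphPath G} (hp : p ∈ R)
    (hz : z ∈ p.support) : ∃ u, beforeOn p u z ∧ u ∉ insert s Y := by
  by_contra! hall
  exact h.2.2 ⟨p, hp, .inl ⟨hz, h.2.1, hall⟩⟩

theorem IsSeparatedPrefix.exists_mem_frontier_of_walk (hY : IsSeparatedPrefix R Y)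
    {a b : V} (w : G.Walk a b) (ha : a ∈ Y) (hb : b ∉ Y) :
    ∃ x ∈ w.support, x ∈ linkageFrontier R Y := by
  obtain ⟨d, hd, hd₁, hd₂⟩ := w.exists_boundary_dart Y ha hb
  rcases hY.adj_mem_frontier _ _ d.adj hd₁ hd₂ with h | h
  · exact ⟨_, w.dart_fst_mem_support_of_mem_darts hd, h⟩
  · exact ⟨_, w.dart_snd_mem_support_of_mem_darts hd, h⟩

theorem exists_isFirstOutside {p : GraphPath G} (h : ¬ p.support ⊆ Y) :
    ∃ s, IsFirstOutside p Y s := by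
  classical
  have hex : ∃ n, ∃ x ∈ p.support, x ∉ Y ∧ p.index x = n := by
    obtain ⟨x, hx, hxY⟩ := Set.not_subset.1 h
    exact ⟨_, x, hx, hxY, rfl⟩
  obtain ⟨s, hs, hsY, hidx⟩ := Nat.find_spec hex
  refine ⟨s, hs, hsY, fun u hu => ?_⟩
  obtain ⟨hu, -, hlt⟩ := GraphPath.beforeOn_iff.1 hu
  by_contra huY
  exact Nat.find_min hex (hidx ▸ hlt) ⟨u, hu, huY, rfl⟩

variable [DecidableEq V]

theorem IsFirstOutside.index_le {p : GraphPath G} {s x : V} (hs : IsFirstOutside p Y s)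
    (hx : x ∈ p.support) (hxY : x ∉ Y) : p.index s ≤ p.index x := by
  by_contra! hlt
  exact hxY (hs.2.2 x (GraphPath.beforeOn_iff.2 ⟨hx, hs.1, hlt⟩))

theorem Blocks.index_lt {s z s' : V} (h : Blocks R Y s z) {p : GraphPath G} (hp : p ∈ R)
    (hz : z ∈ p.support) (hs' : IsFirstOutside p Y s') : p.index s' < p.index z := by
  obtain ⟨u, hu, huY⟩ := h.exists_beforeOn hp hz
  obtain ⟨hup, -, hlt⟩ := GraphPath.beforeOn_iff.1 hu
  exact (hs'.index_le hup fun h => huY (.inr h)).trans_lt hlt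

theorem Blocks.disjoint_prefixTo_suffixFrom
    (hR : R.Pairwise fun p q => Disjoint p.support q.support) {p q : GraphPath G}
    (hp : p ∈ R) (hq : q ∈ R) {s s' z : V} (hs : IsFirstOutside p Y s) (h : Blocks R Y s' z)
    (hz : z ∈ q.support) : Disjoint (p.prefixTo s) (q.suffixFrom z) := by
  obtain rfl | hne := eq_or_ne p q
  · rw [Set.disjoint_left]
    rintro x ⟨-, hxs⟩ ⟨-, hzx⟩
    have := h.index_lt hp hz hs
    omega
  · exact (hR hp hq hne).mono (Set.sep_subset _ _) (Set.sep_subset _ _)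

-- The splice would have to be `p` itself, yet it skips a vertex of `p` lying before `z`.
theorem Blocks.splice_not_mem (hR : R.Pairwise fun p q => Disjoint p.support q.support)
    {p q r : GraphPath G} (hp : p ∈ R) (hq : q ∈ R) {s z : V} (hs : IsFirstOutside p Y s)
    (h : Blocks R Y s z) (hz : z ∈ q.support) (hlast : r.last = q.last)
    (hsupp : r.support = p.prefixTo s ∪ q.suffixFrom z) : r ∉ R := by
  intro hr
  have hsr : s ∈ r.support := hsupp ▸ (Or.inl ⟨hs.1, le_rfl⟩ : s ∈ p.prefixTo s ∪ _)
  obtain rfl : r = p := eq_of_mem_support_of_mem_support hR hr hp hsr hs.1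
  obtain rfl : q = r := eq_of_mem_support_of_mem_support hR hq hr q.walk.end_mem_support
    (hlast ▸ r.walk.end_mem_support)
  obtain ⟨u, hu, huY⟩ := h.exists_beforeOn hp hz
  obtain ⟨huq, -, hlt⟩ := GraphPath.beforeOn_iff.1 hu
  have hur := huq
  rw [hsupp] at hur
  rcases hur with ⟨-, hle⟩ | ⟨-, hge⟩
  · have hge := hs.index_le huq fun h => huY (.inr h)
    exact huY (.inl (GraphPath.eq_of_index_eq huq (le_antisymm hle hge)))
  · omega

end Frontier

section Extension

variable {V : Type} {G : SimpleGraph V} {R : Set (GraphPath G)} {Y : Set V} {A B : Set V}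

theorem IsLinkage.exists_ne_of_blocked_cycle (hR : IsLinkage A B R)
    {C : Set (GraphPath G)} (hCR : C ⊆ R) (hC : C.Nonempty) {J : GraphPath G → GraphPath G}
    (hJ : Set.BijOn J C C) {s z : GraphPath G → V} (hs : ∀ p ∈ C, IsFirstOutside p Y (s p))
    (hz : ∀ p ∈ C, Blocks R Y (s p) (z p)) (hzJ : ∀ p ∈ C, z p ∈ (J p).support) :
    ∃ R', IsLinkage A B R' ∧ R' ≠ R := by
  classical
  obtain ⟨q, hq⟩ := hC
  have hpair := hR.1
  have hJR : ∀ p ∈ C, J p ∈ R := fun p hp => hCR (hJ.mapsTo hp)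
  have hdisj : ∀ p ∈ C, ∀ p' ∈ C, Disjoint (p.prefixTo (s p)) ((J p').suffixFrom (z p')) :=
    fun p hp p' hp' => (hz p' hp').disjoint_prefixTo_suffixFrom hpair (hCR hp) (hJR p' hp')
      (hs p hp) (hzJ p' hp')
  have hsplice : ∀ p ∈ C, ∃ r : GraphPath G, r.first = p.first ∧ r.last = (J p).last ∧
      r.support = p.prefixTo (s p) ∪ (J p).suffixFrom (z p) := fun p hp =>
    GraphPath.exists_splice p (J p) (hs p hp).1 (hzJ p hp) (hz p hp).1 (hdisj p hp p hp)
  choose! r hrfirst hrlast hrsupp using hsplice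
  refine ⟨(R \ C) ∪ r '' C, hR.reroute hCR hJ r hrfirst hrlast ?_ ?_, fun heq => ?_⟩
  · intro p hp
    rw [hrsupp p hp]
    exact Set.union_subset_union (Set.sep_subset _ _) (Set.sep_subset _ _)
  · intro p hp p' hp' hne
    have hJne : J p ≠ J p' := fun h => hne (hJ.injOn hp hp' h)
    rw [hrsupp p hp, hrsupp p' hp', Set.disjoint_union_left, Set.disjoint_union_right,
      Set.disjoint_union_right]
    exact ⟨⟨(hpair (hCR hp) (hCR hp') hne).mono (Set.sep_subset _ _) (Set.sep_subset _ _),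
      hdisj p hp p' hp'⟩, (hdisj p' hp' p hp).symm,
      (hpair (hJR p hp) (hJR p' hp') hJne).mono (Set.sep_subset _ _) (Set.sep_subset _ _)⟩
  · exact (hz q hq).splice_not_mem hpair (hCR hq) (hJR q hq) (hs q hq) (hzJ q hq) (hrlast q hq)
      (hrsupp q hq) (heq ▸ (Or.inr ⟨q, hq, rfl⟩ : r q ∈ (R \ C) ∪ r '' C))

theorem PerfectUniqueLinkage.exists_unblocked [Finite V] (hR : PerfectUniqueLinkage A B R)
    (hY : Y ≠ Set.univ) : ∃ p ∈ R, ∃ s, IsFirstOutside p Y s ∧ ∀ z, ¬ Blocks R Y s z := by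
  classical
  obtain ⟨hlink, huniq, hcover⟩ := hR
  by_contra! hblocked
  set S := {p ∈ R | ¬ p.support ⊆ Y}
  have hstep : ∀ p ∈ S, ∃ s z q, IsFirstOutside p Y s ∧ Blocks R Y s z ∧ q ∈ S ∧
      z ∈ q.support := by
    rintro p ⟨hp, hpY⟩
    obtain ⟨s, hs⟩ := exists_isFirstOutside hpY
    obtain ⟨z, hz⟩ := hblocked p hp s hs
    obtain ⟨q, hq, hzq⟩ := hcover z
    exact ⟨s, z, q, hs, hz, ⟨hq, fun h => hz.2.1 (.inr (h hzq))⟩, hzq⟩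
  obtain ⟨v, hv⟩ := (Set.ne_univ_iff_exists_notMem Y).1 hY
  obtain ⟨p₀, hp₀, hvp₀⟩ := hcover v
  have : Nonempty V := ⟨v⟩
  have : Nonempty (GraphPath G) := ⟨p₀⟩
  choose! s z J hs hz hJ hzJ using hstep
  have hSR : S ⊆ R := Set.sep_subset _ _
  obtain ⟨C, hCS, hC, hJC⟩ := ((finite_of_pairwise_disjoint_support hlink.1).subset hSR)
    |>.exists_bijOn_of_mapsTo ⟨p₀, hp₀, fun h => hv (h hvp₀)⟩ hJ
  obtain ⟨R', hR', hne⟩ := hlink.exists_ne_of_blocked_cycle (hCS.trans hSR) hC hJC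
    (fun p hp => hs p (hCS hp)) (fun p hp => hz p (hCS hp)) (fun p hp => hzJ p (hCS hp))
  exact hne (huniq R' hR')

theorem IsSeparatedPrefix.exists_insert [Finite V] (hR : PerfectUniqueLinkage A B R)
    (hY : IsSeparatedPrefix R Y) (hne : Y ≠ Set.univ) :
    ∃ v ∉ Y, IsSeparatedPrefix R (insert v Y) := by
  obtain ⟨p, hp, s, hs, hunblocked⟩ := hR.exists_unblocked hne
  exact ⟨s, hs.2.1, hY.insert_of_not_blocks hR.1.1 hp hs hunblocked⟩

end Extension

section Numbering

variable {V : Type} [Fintype V] {G : SimpleGraph V} {R : Set (GraphPath G)} {A B : Set V}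

theorem PerfectUniqueLinkage.exists_list_isSeparatedPrefix (hR : PerfectUniqueLinkage A B R)
    {k : ℕ} (hk : k ≤ Fintype.card V) :
    ∃ L : List V, L.Nodup ∧ L.length = k ∧ ∀ i, IsSeparatedPrefix R {v | v ∈ L.take i} := by
  classical
  induction k with
  | zero => exact ⟨[], List.nodup_nil, rfl, fun i => by simpa using isSeparatedPrefix_empty R⟩
  | succ k ih =>
    obtain ⟨L, hnd, hlen, hL⟩ := ih (by omega)
    have hY : IsSeparatedPrefix R {v | v ∈ L} := by simpa using hL L.length
    have hne : {v | v ∈ L} ≠ Set.univ := fun h => by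
      have := hnd.forall_mem_iff_length_eq_card.1 (Set.eq_univ_iff_forall.1 h)
      omega
    obtain ⟨v, hv, hins⟩ := hY.exists_insert hR hne
    refine ⟨L ++ [v], hnd.append (List.nodup_singleton v) (by simpa using hv), by simp [hlen],
      fun i => ?_⟩
    by_cases hi : i ≤ L.length
    · simpa [List.take_append, Nat.sub_eq_zero_of_le hi] using hL i
    · rw [List.take_of_length_le (by simp; omega)]
      convert hins using 1
      ext
      simp [or_comm]

theorem PerfectUniqueLinkage.exists_equiv_isSeparatedPrefix (hR : PerfectUniqueLinkage A B R) :
    ∃ μ : V ≃ Fin (Fintype.card V), ∀ t, IsSeparatedPrefix R {v | (μ v).val + 1 < t} := by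
  classical
  obtain ⟨L, hnd, hlen, hL⟩ := hR.exists_list_isSeparatedPrefix le_rfl
  have hmem := hnd.forall_mem_iff_length_eq_card.2 hlen
  refine ⟨(hnd.getEquivOfForallMemList L hmem).symm.trans (finCongr hlen), fun t => ?_⟩
  convert hL (t - 1) using 1
  ext v
  simp only [Equiv.trans_apply, List.Nodup.getEquivOfForallMemList_symm_apply_val,
    finCongr_apply, Fin.val_cast, Set.mem_ofPred_eq, List.mem_take_iff_idxOf_lt (hmem v)]
  omega

theorem sepSet_eq_linkageFrontier (R : Set (GraphPath G)) (μ : V ≃ Fin (Fintype.card V))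
    (t : ℕ) : sepSet R μ t = linkageFrontier R {v | (μ v).val + 1 < t} := by
  ext v
  simp only [sepSet, linkageFrontier, IsFirstOutside, Set.subset_def, Set.mem_ofPred_eq, not_lt]
  constructor
  · rintro ⟨p, hp, hv, h | h⟩
    exacts [⟨p, hp, .inl ⟨hv, h⟩⟩, ⟨p, hp, .inr h⟩]
  · rintro ⟨p, hp, ⟨hv, h⟩ | h⟩
    · exact ⟨p, hp, hv, .inl h⟩
    · exact ⟨p, hp, h.1 ▸ p.walk.end_mem_support, .inr h⟩

end Numbering

theorem numbering_lemma_general {V : Type} [Fintype V] {G : SimpleGraph V}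
    (Ah Bh : Set V)
    (Rh : Set (GraphPath G)) (hR : PerfectUniqueLinkage Ah Bh Rh) :
    ∃ μ : V ≃ Fin (Fintype.card V),
      (∀ p ∈ Rh, ∀ u v : V, beforeOn p u v → (μ u).val < (μ v).val) ∧
      (∀ t : ℕ, 0 < t → t ≤ Fintype.card V →
        ∀ q : GraphPath G,
          (∀ x ∈ q.support, x ∉ sepSet Rh μ t) →
          ¬ (((μ q.first).val + 1 < t ∧ t ≤ (μ q.last).val + 1) ∨
             ((μ q.last).val + 1 < t ∧ t ≤ (μ q.first).val + 1))) := by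
  obtain ⟨μ, hμ⟩ := hR.exists_equiv_isSeparatedPrefix
  refine ⟨μ, fun p hp u v huv => ?_, fun t _ _ q hq hcross => ?_⟩
  · have hle : (μ u).val + 1 < (μ v).val + 2 :=
      (hμ ((μ v).val + 2)).mem_of_beforeOn p hp u v huv (by simp)
    have hne : (μ u).val ≠ (μ v).val := fun h => huv.ne (μ.injective (Fin.ext h))
    omega
  · rw [sepSet_eq_linkageFrontier] at hq
    rcases hcross with ⟨h₁, h₂⟩ | ⟨h₁, h₂⟩
    · obtain ⟨x, hx, hxF⟩ := (hμ t).exists_mem_frontier_of_walk q.walk h₁ (not_lt.2 h₂)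
      exact hq x hx hxF
    · obtain ⟨x, hx, hxF⟩ := (hμ t).exists_mem_frontier_of_walk q.walk.reverse h₁ (not_lt.2 h₂)
      exact hq x (by simpa [GraphPath.support] using hx) hxF

/-- Lemma 4.6, the numbering lemma of Robertson–Seymour: if `G`
has the perfect unique linkage property with respect to `(A, B)` with unique
linkage `R`, then there is a bijection `μ : V(G) → {1, …, |V(G)|}` that is strictly
increasing along every path of `R`, and such that for every `0 < t ≤ |V(G)|` the
separator `S_t` disconnects `Y_t = {v : μ(v) < t}` from `Z_t = {v : μ(v) ≥ t}`:
no path of `G` avoiding `S_t` connects a vertex of `Y_t` to a vertex of `Z_t`. -/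
theorem numbering_lemma {V : Type} [Fintype V] {G : SimpleGraph V}
    (Ah Bh : Set V) (hcard : Ah.ncard = Bh.ncard)
    (Rh : Set (GraphPath G)) (hR : PerfectUniqueLinkage Ah Bh Rh) :
    ∃ μ : V ≃ Fin (Fintype.card V),
      (∀ p ∈ Rh, ∀ u v : V, beforeOn p u v → (μ u).val < (μ v).val) ∧
      (∀ t : ℕ, 0 < t → t ≤ Fintype.card V →
        ∀ q : GraphPath G,
          (∀ x ∈ q.support, x ∉ sepSet Rh μ t) →
          ¬ (((μ q.first).val + 1 < t ∧ t ≤ (μ q.last).val + 1) ∨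
             ((μ q.last).val + 1 < t ∧ t ≤ (μ q.first).val + 1))) :=
  numbering_lemma_general Ah Bh Rh hR
end

section
/- Let R̂, Q̂ be two sets of node-disjoint paths in a graph Ĝ, and let ŵ, D̂ > 0 be integers. Assume that each path Q ∈ Q̂ intersects at least 2D̂ distinct paths of R̂, and that |Q̂| ≥ 2|R̂|·ŵ/D̂. Then there is a partition (R̂', R̂'') of R̂, and a subset Q̂' ⊆ Q̂ of paths, such that (R̂', Q̂') is a (ŵ, D̂)-intersecting pair of path sets, |Q̂'| ≥ |Q̂|/2, and every path in R̂'' intersects at most ŵ paths of Q̂'. -/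
open SimpleGraph

/-!
Prune greedily: discard a path of `Qh` meeting fewer than `Dh` of the remaining paths of `Rh`,
or a path of `Rh` meeting fewer than `wh` of the remaining paths of `Qh`, until neither exists.
Charge each incidence between a discarded path of `Qh` and a path of `Rh` to whichever of the two
was discarded first: a path of `Qh` is charged fewer than `Dh` incidences, a path of `Rh` fewer
than `wh`. A discarded path of `Qh` had at least `2 Dh` incidences, so `Dh` times the number of
discarded paths of `Qh` is at most `wh |Rh| ≤ Dh |Qh| / 2`.
-/

open Finset

theorem Set.ncard_sep_coe_finset {α : Type*} (s : Finset α) (p : α → Prop) [DecidablePred p] :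
    {a ∈ (s : Set α) | p a}.ncard = #(s.filter p) := by
  rw [← Set.ncard_coe_finset, coe_filter]
  rfl

namespace Finset

variable {α β : Type*} [DecidableEq α] (r : α → β → Prop) [∀ a b, Decidable (r a b)]

theorem card_bipartiteBelow_eq_card_erase_add {s : Finset α} {a : α} (ha : a ∈ s) (b : β) :
    #(s.bipartiteBelow r b) = #((s.erase a).bipartiteBelow r b) + if r a b then 1 else 0 := by
  unfold bipartiteBelow
  rw [filter_erase]
  split_ifs with hab
  · exact (card_erase_add_one (mem_filter.2 ⟨ha, hab⟩)).symm
  · rw [add_zero, erase_eq_of_notMem]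
    simp [hab]

theorem sum_card_bipartiteBelow_eq_sum_card_erase_add {s : Finset α} {a : α} (ha : a ∈ s) (t : Finset β) :
    ∑ b ∈ t, #(s.bipartiteBelow r b) =
      ∑ b ∈ t, #((s.erase a).bipartiteBelow r b) + #(t.bipartiteAbove r a) := by
  simp only [card_bipartiteBelow_eq_card_erase_add r ha, sum_add_distrib, sum_boole,
    Nat.cast_id, bipartiteAbove]

theorem exists_degree_pruning [DecidableEq β] (w D : ℕ) (s : Finset α) (t : Finset β) :
    ∃ s' ⊆ s, ∃ t' ⊆ t,
      (∀ a ∈ s', w ≤ #(t'.bipartiteAbove r a)) ∧ (∀ b ∈ t', D ≤ #(s'.bipartiteBelow r b)) ∧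
      (∀ a ∈ s \ s', #(t'.bipartiteAbove r a) < w) ∧
      ∑ b ∈ t \ t', #(s.bipartiteBelow r b) ≤ w * #(s \ s') + D * #(t \ t') := by
  by_cases hlowB : ∃ b ∈ t, #(s.bipartiteBelow r b) < D
  · obtain ⟨b, hb, hbD⟩ := hlowB
    obtain ⟨s', hs', t', ht', hA, hB, hrest, hsum⟩ := exists_degree_pruning w D s (t.erase b)
    have hbt' : b ∉ t' := fun h => notMem_erase b t (ht' h)
    have hdiff : (t \ t').erase b = t.erase b \ t' := (erase_sdiff_comm t t' b).symm
    have hbdiff : b ∈ t \ t' := mem_sdiff.2 ⟨hb, hbt'⟩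
    refine ⟨s', hs', t', ht'.trans (erase_subset b t), hA, hB, hrest, ?_⟩
    rw [← add_sum_erase _ _ hbdiff, ← card_erase_add_one hbdiff, hdiff]
    linarith
  by_cases hlowA : ∃ a ∈ s, #(t.bipartiteAbove r a) < w
  · obtain ⟨a, ha, haw⟩ := hlowA
    obtain ⟨s', hs', t', ht', hA, hB, hrest, hsum⟩ := exists_degree_pruning w D (s.erase a) t
    have has' : a ∉ s' := fun h => notMem_erase a s (hs' h)
    have hdiff : (s \ s').erase a = s.erase a \ s' := (erase_sdiff_comm s s' a).symm
    have hadiff : a ∈ s \ s' := mem_sdiff.2 ⟨ha, has'⟩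
    have hlost : #((t \ t').bipartiteAbove r a) ≤ w :=
      (card_le_card (filter_subset_filter _ sdiff_subset)).trans haw.le
    refine ⟨s', hs'.trans (erase_subset a s), t', ht', hA, hB, fun x hx => ?_, ?_⟩
    · obtain rfl | hxa := eq_or_ne x a
      · exact (card_le_card (filter_subset_filter _ ht')).trans_lt haw
      · exact hrest x (by rw [← hdiff]; exact mem_erase.2 ⟨hxa, hx⟩)
    · rw [sum_card_bipartiteBelow_eq_sum_card_erase_add r ha, ← card_erase_add_one hadiff, hdiff]
      linarith
  push Not at hlowA hlowB
  exact ⟨s, subset_rfl, t, subset_rfl, hlowA, hlowB, by simp, by simp⟩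
termination_by #s + #t
decreasing_by
  · have := card_erase_lt_of_mem hb; omega
  · have := card_erase_lt_of_mem ha; omega

end Finset

instance GraphPath.finite {V : Type} [Finite V] {G : SimpleGraph V} : Finite (GraphPath G) := by
  classical
  have := Fintype.ofFinite V
  refine Finite.of_injective
    (fun p : GraphPath G => (⟨(p.first, p.last), ⟨p.walk, p.isPath⟩⟩ : Σ x : V × V, G.Path x.1 x.2))
    ?_
  rintro ⟨u, v, p, hp⟩ ⟨u', v', p', hp'⟩ h
  simp only [Sigma.mk.injEq, Prod.mk.injEq] at h
  obtain ⟨⟨rfl, rfl⟩, h⟩ := h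
  cases h
  rfl

theorem intersecting_pair_cleanup_general {V : Type} [Fintype V] {G : SimpleGraph V}
    (Rh Qh : Set (GraphPath G))
    (wh Dh : ℕ) (hD : 0 < Dh)
    (hQmeets : ∀ q ∈ Qh, 2 * Dh ≤ {r ∈ Rh | ¬ Disjoint r.support q.support}.ncard)
    (hsize : 2 * Rh.ncard * wh ≤ Dh * Qh.ncard) :
    ∃ R' Q' : Set (GraphPath G), R' ⊆ Rh ∧ Q' ⊆ Qh ∧
      IntersectingPair R' Q' wh Dh ∧
      Qh.ncard ≤ 2 * Q'.ncard ∧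
      (∀ r ∈ Rh \ R', {q ∈ Q' | ¬ Disjoint r.support q.support}.ncard ≤ wh) := by
  classical
  lift Rh to Finset (GraphPath G) using Rh.toFinite
  lift Qh to Finset (GraphPath G) using Qh.toFinite
  set meets : GraphPath G → GraphPath G → Prop := fun r q => ¬ Disjoint r.support q.support
  obtain ⟨R', hR', Q', hQ', hRdeg, hQdeg, hrest, hlost⟩ := Rh.exists_degree_pruning meets wh Dh Qh
  simp only [Set.ncard_sep_coe_finset, Set.ncard_coe_finset] at hQmeets hsize
  have hlost_ge : 2 * Dh * #(Qh \ Q') ≤ ∑ q ∈ Qh \ Q', #(Rh.bipartiteBelow meets q) := by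
    rw [mul_comm, ← smul_eq_mul, ← sum_const]
    exact sum_le_sum fun q hq => hQmeets q (sdiff_subset hq)
  have hhalf : 2 * #(Qh \ Q') ≤ #Qh := by
    have hdiscarded : #(Rh \ R') ≤ #Rh := card_le_card sdiff_subset
    refine Nat.le_of_mul_le_mul_left ?_ hD
    nlinarith
  refine ⟨R', Q', by simpa, by simpa, ⟨fun r hr => ?_, fun q hq => ?_⟩, ?_, fun r hr => ?_⟩ <;>
    simp only [Set.ncard_sep_coe_finset, Set.ncard_coe_finset]
  · exact hRdeg r hr
  · exact hQdeg q hq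
  · rw [card_sdiff_of_subset hQ'] at hhalf
    omega
  · exact (hrest r (by simpa using hr)).le

/-- Lemma 4.7: let `R, Q` be two sets of node-disjoint paths
such that every path of `Q` intersects at least `2D` distinct paths of `R`, and
`|Q| ≥ 2 |R| w / D`. Then there is a partition `(R', R'')` of `R` and a subset
`Q' ⊆ Q` such that `(R', Q')` is a `(w, D)`-intersecting pair, `|Q'| ≥ |Q| / 2`,
and every path of `R''` intersects at most `w` paths of `Q'`. -/
theorem intersecting_pair_cleanup {V : Type} [Fintype V] {G : SimpleGraph V}
    (Rh Qh : Set (GraphPath G))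
    (hRdisj : Rh.Pairwise fun p q => Disjoint p.support q.support)
    (hQdisj : Qh.Pairwise fun p q => Disjoint p.support q.support)
    (wh Dh : ℕ) (hw : 0 < wh) (hD : 0 < Dh)
    (hQmeets : ∀ q ∈ Qh, 2 * Dh ≤ {r ∈ Rh | ¬ Disjoint r.support q.support}.ncard)
    (hsize : 2 * Rh.ncard * wh ≤ Dh * Qh.ncard) :
    ∃ R' Q' : Set (GraphPath G), R' ⊆ Rh ∧ Q' ⊆ Qh ∧
      IntersectingPair R' Q' wh Dh ∧
      Qh.ncard ≤ 2 * Q'.ncard ∧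
      (∀ r ∈ Rh \ R', {q ∈ Q' | ¬ Disjoint r.support q.support}.ncard ≤ wh) :=
  intersecting_pair_cleanup_general Rh Qh wh Dh hD hQmeets hsize
end
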